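/- arXiv:1503.05872 — 5 statements merged into one kernel-verified Lean document; each statement's English description precedes it below -/
import Mathlib

section
/- Universal lower bound on steady-state queue lengths in a saturated switch (Proposition 3.1, fixed-ε version). Fix n ≥ 1, 0 < ε < 1, and ν ∈ F, and suppose the arrival means are λ_{ij} = (1−ε)ν_{ij} with variances σ_{ij}². Let the schedule be chosen by an arbitrary scheduling policy, i.e., any map from states q ∈ ℕ^{n×n} to probability distributions over schedules (0–1 matrices with at most one 1 per row and per column), with the chosen schedule independent of the current arrivals. If π is an invariant (stationary) distribution of the resulting Markov chain on ℕ^{n×n} such that E_π[(∑_{ij} q̄_{ij})²] < ∞, then E_π[∑_{ij} q̄_{ij}] ≥ ‖σ‖²/(2ε) − n(1−ε)/2, where ‖σ‖² = ∑_{ij} σ_{ij}². -/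
open scoped BigOperators ENNReal

namespace SwitchModel

/-- Next queue state: `q⁺_{ij} = max(q_{ij} + a_{ij} − s_{ij}, 0)` (truncated `ℕ` subtraction). -/
def nextQ (n : ℕ) (q a s : Fin n → Fin n → ℕ) : Fin n → Fin n → ℕ :=
  fun i j => q i j + a i j - s i j

/-- A 0–1 matrix with at most one 1 per row and per column. -/
def IsSchedule (n : ℕ) (s : Fin n → Fin n → ℕ) : Prop :=
  (∀ i j, s i j ≤ 1) ∧ (∀ i, (∑ j, s i j) ≤ 1) ∧ (∀ j, (∑ i, s i j) ≤ 1)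

/-- A permutation matrix: exactly one 1 per row and per column. -/
def IsPerm (n : ℕ) (s : Fin n → Fin n → ℕ) : Prop :=
  (∀ i j, s i j ≤ 1) ∧ (∀ i, (∑ j, s i j) = 1) ∧ (∀ j, (∑ i, s i j) = 1)

/-- MaxWeight selection: `sched q` is a permutation matrix maximizing `∑ q_{ij} s_{ij}`. -/
def IsMaxWeight (n : ℕ) (sched : (Fin n → Fin n → ℕ) → (Fin n → Fin n → ℕ)) : Prop :=
  ∀ q, IsPerm n (sched q) ∧
    ∀ s, IsPerm n s → (∑ i, ∑ j, q i j * s i j) ≤ (∑ i, ∑ j, q i j * sched q i j)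

/-- Joint arrival probability: the entries are mutually independent with marginals `A i j`. -/
noncomputable def jointA (n : ℕ) (A : Fin n → Fin n → ℕ → ℝ≥0∞) (a : Fin n → Fin n → ℕ) : ℝ≥0∞ :=
  ∏ i, ∏ j, A i j (a i j)

/-- `A i j` is a probability distribution on `ℕ` supported on `[0, amax]`,
with mean `lam i j` and variance `(sig i j)^2`. -/
def ArrivalDist (n : ℕ) (A : Fin n → Fin n → ℕ → ℝ≥0∞)
    (lam sig : Fin n → Fin n → ℝ) (amax : ℕ) : Prop :=
  (∀ i j, (∑' k : ℕ, A i j k) = 1) ∧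
  (∀ i j k, A i j k ≠ 0 → k ≤ amax) ∧
  (∀ i j, (∑' k : ℕ, (A i j k).toReal * (k : ℝ)) = lam i j) ∧
  (∀ i j, (∑' k : ℕ, (A i j k).toReal * ((k : ℝ) - lam i j) ^ 2) = (sig i j) ^ 2)

/-- Transition kernel of the switch under a deterministic scheduling map `sched`. -/
noncomputable def kernelMW (n : ℕ) (A : Fin n → Fin n → ℕ → ℝ≥0∞)
    (sched : (Fin n → Fin n → ℕ) → (Fin n → Fin n → ℕ))
    (q q' : Fin n → Fin n → ℕ) : ℝ≥0∞ :=
  ∑' a : Fin n → Fin n → ℕ, jointA n A a * (if nextQ n q a (sched q) = q' then 1 else 0)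

/-- Transition kernel of the switch under a randomized scheduling policy `pol`
(the schedule is chosen independently of the current arrivals). -/
noncomputable def kernelPol (n : ℕ) (A : Fin n → Fin n → ℕ → ℝ≥0∞)
    (pol : (Fin n → Fin n → ℕ) → (Fin n → Fin n → ℕ) → ℝ≥0∞)
    (q q' : Fin n → Fin n → ℕ) : ℝ≥0∞ :=
  ∑' a : Fin n → Fin n → ℕ, ∑' s : Fin n → Fin n → ℕ,
    jointA n A a * pol q s * (if nextQ n q a s = q' then 1 else 0)

/-- `pd` is an invariant (stationary) probability distribution of the kernel `P`. -/
def IsInvariant (n : ℕ)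
    (P : (Fin n → Fin n → ℕ) → (Fin n → Fin n → ℕ) → ℝ≥0∞)
    (pd : (Fin n → Fin n → ℕ) → ℝ≥0∞) : Prop :=
  (∑' q : Fin n → Fin n → ℕ, pd q) = 1 ∧
  ∀ q', (∑' q : Fin n → Fin n → ℕ, pd q * P q q') = pd q'

/-- The face `F`: nonnegative matrices with all row and column sums equal to 1. -/
def memF (n : ℕ) (ν : Fin n → Fin n → ℝ) : Prop :=
  (∀ i j, 0 ≤ ν i j) ∧ (∀ i, (∑ j, ν i j) = 1) ∧ (∀ j, (∑ i, ν i j) = 1)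

/-- Steady-state expectation of the total queue length `∑_{ij} q_{ij}`. -/
noncomputable def Etot (n : ℕ) (pd : (Fin n → Fin n → ℕ) → ℝ≥0∞) : ℝ≥0∞ :=
  ∑' q : Fin n → Fin n → ℕ, pd q * (∑ i, ∑ j, (q i j : ℝ≥0∞))

/-- Steady-state expectation of `(∑_{ij} q_{ij})²`. -/
noncomputable def Etot2 (n : ℕ) (pd : (Fin n → Fin n → ℕ) → ℝ≥0∞) : ℝ≥0∞ :=
  ∑' q : Fin n → Fin n → ℕ, pd q * (∑ i, ∑ j, (q i j : ℝ≥0∞)) ^ 2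

/-- Euclidean norm on `ℝ^{n×n}`. -/
noncomputable def normE (n : ℕ) (x : Fin n → Fin n → ℝ) : ℝ :=
  Real.sqrt (∑ i, ∑ j, x i j ^ 2)

/-- The cone `K = {x : x_{ij} = w_i + w̃_j, w, w̃ ≥ 0}`. -/
def coneK (n : ℕ) : Set (Fin n → Fin n → ℝ) :=
  {x | ∃ w wt : Fin n → ℝ, (∀ i, 0 ≤ w i) ∧ (∀ j, 0 ≤ wt j) ∧ ∀ i j, x i j = w i + wt j}

/-- Embedding of queue states into `ℝ^{n×n}`. -/
def toR (n : ℕ) (q : Fin n → Fin n → ℕ) : Fin n → Fin n → ℝ :=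
  fun i j => (q i j : ℝ)

/-- `proj` is the nearest-point projection onto the cone `K`. -/
def IsConeProj (n : ℕ) (proj : (Fin n → Fin n → ℝ) → (Fin n → Fin n → ℝ)) : Prop :=
  ∀ x, proj x ∈ coneK n ∧ ∀ y ∈ coneK n, normE n (x - proj x) ≤ normE n (x - y)

/-- Bernoulli distribution on `ℕ` with success probability `p`. -/
noncomputable def bern (p : ℝ) : ℕ → ℝ≥0∞ :=
  fun k => if k = 0 then ENNReal.ofReal (1 - p) else if k = 1 then ENNReal.ofReal p else 0

end SwitchModel

open SwitchModel

/-!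
Fix an input port `i` and let `X = ∑ⱼ qᵢⱼ` be its total backlog and `S = ∑ⱼ aᵢⱼ` its arrivals in
one slot, independent of `X`, with `E S = 1 - ε` and `Var S = ∑ⱼ σᵢⱼ²`. A schedule serves at most
one packet of row `i`, so the next backlog dominates `Y = (X + S - 1)⁺`; by stationarity the next
backlog has the law of `X`, hence `E Y ≤ E X` and `E Y² ≤ E X²`. For `Z = X + S` one has
`Y² + Y + Z = Z²`; expanding `E Z²` by independence and cancelling the finite `E X²` gives
`2 E X (1 - E S) ≥ E S² - E S = ∑ⱼ σᵢⱼ² - ε (1 - ε)`. Summing over `i` gives the claim.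
-/

open Finset

namespace ENNReal

variable {α ι : Type*}

theorem tsum_fin_pi_prod {m : ℕ} (h : Fin m → α → ℝ≥0∞) :
    ∑' f : Fin m → α, ∏ i, h i (f i) = ∏ i, ∑' x, h i x := by
  induction m with
  | zero => simp
  | succ m ih =>
    rw [← (Fin.consEquiv fun _ => α).tsum_eq, ENNReal.tsum_prod']
    simp only [Fin.consEquiv_apply, Fin.prod_univ_succ, Fin.cons_zero, Fin.cons_succ,
      ENNReal.tsum_mul_left, ih, ENNReal.tsum_mul_right]

theorem tsum_pi_prod [Fintype ι] (h : ι → α → ℝ≥0∞) :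
    ∑' f : ι → α, ∏ i, h i (f i) = ∏ i, ∑' x, h i x := by
  let e := (Fintype.equivFin ι).symm
  rw [← (Equiv.piCongrLeft (fun _ => α) e).tsum_eq, ← e.prod_comp (fun i => ∑' x, h i x),
    ← tsum_fin_pi_prod]
  congr with f
  rw [← e.prod_comp]
  simp

section Marginals

variable [Fintype ι] {h : ι → α → ℝ≥0∞}

theorem tsum_pi_prod_mul_prod [DecidableEq ι] (hh : ∀ i, ∑' x, h i x = 1) (s : Finset ι)
    (g : ι → α → ℝ≥0∞) :
    ∑' f : ι → α, (∏ i, h i (f i)) * ∏ i ∈ s, g i (f i) = ∏ i ∈ s, ∑' x, h i x * g i x := by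
  have hf : ∀ f : ι → α, (∏ i, h i (f i)) * ∏ i ∈ s, g i (f i) =
      ∏ i, h i (f i) * if i ∈ s then g i (f i) else 1 := fun f => by
    rw [prod_mul_distrib, Fintype.prod_ite_mem]
  rw [tsum_congr hf, tsum_pi_prod fun i x => h i x * if i ∈ s then g i x else 1,
    ← Fintype.prod_ite_mem s]
  exact Fintype.prod_congr _ _ fun i => by split_ifs <;> simp [hh]

theorem tsum_pi_prod_mul_apply (hh : ∀ i, ∑' x, h i x = 1) (i : ι) (g : α → ℝ≥0∞) :
    ∑' f : ι → α, (∏ j, h j (f j)) * g (f i) = ∑' x, h i x * g x := by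
  classical
  simpa using tsum_pi_prod_mul_prod hh {i} fun _ => g

theorem tsum_pi_prod_mul_apply_mul_apply [DecidableEq ι] (hh : ∀ i, ∑' x, h i x = 1) {i j : ι}
    (hij : i ≠ j) (g₁ g₂ : α → ℝ≥0∞) :
    ∑' f : ι → α, (∏ k, h k (f k)) * (g₁ (f i) * g₂ (f j)) =
      (∑' x, h i x * g₁ x) * ∑' x, h j x * g₂ x := by
  simpa [prod_pair hij, hij.symm] using
    tsum_pi_prod_mul_prod hh {i, j} fun k => if k = i then g₁ else g₂

theorem tsum_pi_prod_mul_sum (hh : ∀ i, ∑' x, h i x = 1) (X : ι → α → ℝ≥0∞) :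
    ∑' f : ι → α, (∏ i, h i (f i)) * ∑ i, X i (f i) = ∑ i, ∑' x, h i x * X i x := by
  simp_rw [mul_sum]
  rw [Summable.tsum_finsetSum fun _ _ => ENNReal.summable]
  exact sum_congr rfl fun i _ => tsum_pi_prod_mul_apply hh i (X i)

theorem tsum_pi_prod_mul_sum_sq (hh : ∀ i, ∑' x, h i x = 1) (X : ι → α → ℝ≥0∞)
    (v : ι → ℝ≥0∞) (hv : ∀ i, ∑' x, h i x * X i x ^ 2 = v i + (∑' x, h i x * X i x) ^ 2) :
    ∑' f : ι → α, (∏ i, h i (f i)) * (∑ i, X i (f i)) ^ 2 =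
      ∑ i, v i + (∑ i, ∑' x, h i x * X i x) ^ 2 := by
  classical
  have hpair : ∀ i j, ∑' f : ι → α, (∏ k, h k (f k)) * (X i (f i) * X j (f j)) =
      (if i = j then v i else 0) + (∑' x, h i x * X i x) * ∑' x, h j x * X j x := by
    intro i j
    rcases eq_or_ne i j with rfl | hij
    · rw [if_pos rfl, ← sq, ← hv]
      simp only [← sq]
      exact tsum_pi_prod_mul_apply hh i fun x => X i x ^ 2
    · simpa [hij] using tsum_pi_prod_mul_apply_mul_apply hh hij (X i) (X j)
  simp_rw [sq, sum_mul_sum, mul_sum]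
  rw [Summable.tsum_finsetSum fun _ _ => ENNReal.summable]
  simp_rw [Summable.tsum_finsetSum fun _ _ => ENNReal.summable, hpair, sum_add_distrib,
    sum_ite_eq, mem_univ, if_true]

end Marginals

theorem tsum_mul_ofReal_eq_ofReal_tsum {p : α → ℝ≥0∞} (hp : ∀ x, p x ≠ ⊤) {r : α → ℝ}
    (hr : ∀ x, 0 ≤ r x) (hs : Summable fun x => (p x).toReal * r x) :
    ∑' x, p x * ENNReal.ofReal (r x) = ENNReal.ofReal (∑' x, (p x).toReal * r x) := by
  rw [ENNReal.ofReal_tsum_of_nonneg (fun x => mul_nonneg toReal_nonneg (hr x)) hs]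
  congr with x
  rw [ENNReal.ofReal_mul toReal_nonneg, ofReal_toReal (hp x)]

end ENNReal

section BoundedSupport

variable {p : ℕ → ℝ≥0∞} {B : ℕ}

theorem summable_toReal_mul_of_support_le (hB : ∀ k, p k ≠ 0 → k ≤ B) (r : ℕ → ℝ) :
    Summable fun k => (p k).toReal * r k :=
  summable_of_ne_finset_zero (s := range (B + 1)) fun k hk => by
    have : p k = 0 := by
      by_contra h
      exact hk (mem_range.2 (Nat.lt_succ_of_le (hB k h)))
    simp [this]

theorem tsum_mul_natCast_of_support_le (hp : ∑' k, p k ≠ ⊤) (hB : ∀ k, p k ≠ 0 → k ≤ B) :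
    ∑' k, p k * (k : ℝ≥0∞) = ENNReal.ofReal (∑' k, (p k).toReal * k) := by
  simpa using ENNReal.tsum_mul_ofReal_eq_ofReal_tsum (ENNReal.ne_top_of_tsum_ne_top hp)
    (fun k => k.cast_nonneg) (summable_toReal_mul_of_support_le hB _)

theorem tsum_mul_natCast_sq_of_support_le (hp : ∑' k, p k = 1) (hB : ∀ k, p k ≠ 0 → k ≤ B)
    {m v : ℝ} (hm : ∑' k, (p k).toReal * k = m) (hv : ∑' k, (p k).toReal * (k - m) ^ 2 = v) :
    ∑' k, p k * (k : ℝ≥0∞) ^ 2 = ENNReal.ofReal v + ENNReal.ofReal m ^ 2 := by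
  have hp_top := ENNReal.ne_top_of_tsum_ne_top (hp ▸ ENNReal.one_ne_top)
  have hsum := summable_toReal_mul_of_support_le hB
  have hm0 : 0 ≤ m := hm ▸ tsum_nonneg fun k => mul_nonneg ENNReal.toReal_nonneg k.cast_nonneg
  have hv0 : 0 ≤ v := hv ▸ tsum_nonneg fun k => mul_nonneg ENNReal.toReal_nonneg (sq_nonneg _)
  have hmass : HasSum (fun k => (p k).toReal) 1 := by
    simpa [← ENNReal.tsum_toReal_eq hp_top, hp] using (hsum fun _ => 1).hasSum
  have hsq : ∑' k, (p k).toReal * (k : ℝ) ^ 2 = v + m ^ 2 := by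
    have := ((hv ▸ (hsum _).hasSum).add ((hm ▸ (hsum _).hasSum).mul_left (2 * m))).sub
      (hmass.mul_left (m ^ 2))
    convert this.tsum_eq using 1
    · congr with k; ring
    · ring
  rw [← ENNReal.ofReal_pow hm0, ← ENNReal.ofReal_add hv0 (by positivity), ← hsq]
  simpa using ENNReal.tsum_mul_ofReal_eq_ofReal_tsum hp_top (fun k => sq_nonneg (k : ℝ)) (hsum _)

end BoundedSupport

theorem Nat.sub_one_sq_add_sub_one_add_self (z : ℕ) : (z - 1) ^ 2 + (z - 1) + z = z ^ 2 := by
  cases z <;> simp; ring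

section IndependentPair

variable {Ω Γ : Type*} {μ : Ω → ℝ≥0∞} {ρ : Γ → ℝ≥0∞}

theorem tsum_mul_tsum_mul_mul (f : Ω → ℝ≥0∞) (g : Γ → ℝ≥0∞) :
    ∑' q, μ q * ∑' a, ρ a * (f q * g a) = (∑' q, μ q * f q) * ∑' a, ρ a * g a := by
  simp_rw [mul_left_comm (ρ _), ENNReal.tsum_mul_left, ← mul_assoc, ENNReal.tsum_mul_right]

variable (hμ : ∑' q, μ q = 1) (hρ : ∑' a, ρ a = 1)
include hμ hρ

theorem tsum_mul_tsum_mul_add (f : Ω → ℝ≥0∞) (g : Γ → ℝ≥0∞) :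
    ∑' q, μ q * ∑' a, ρ a * (f q + g a) = ∑' q, μ q * f q + ∑' a, ρ a * g a := by
  have h : ∀ q a, f q + g a = f q * 1 + 1 * g a := fun q a => by ring
  simp only [h, mul_add, ENNReal.tsum_add, tsum_mul_tsum_mul_mul]
  simp [hμ, hρ]

theorem tsum_mul_tsum_mul_add_sq (f : Ω → ℝ≥0∞) (g : Γ → ℝ≥0∞) :
    ∑' q, μ q * ∑' a, ρ a * (f q + g a) ^ 2 =
      ∑' q, μ q * f q ^ 2 + (2 * (∑' q, μ q * f q) * ∑' a, ρ a * g a + ∑' a, ρ a * g a ^ 2) := by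
  have h : ∀ q a, (f q + g a) ^ 2 = f q ^ 2 * 1 + (2 * f q) * g a + 1 * g a ^ 2 := fun q a => by
    ring
  simp only [h, mul_add, ENNReal.tsum_add, tsum_mul_tsum_mul_mul]
  simp [hμ, hρ, mul_left_comm (μ _) 2, ENNReal.tsum_mul_left, mul_assoc, add_assoc]

end IndependentPair

section Lindley

variable {Ω Γ : Type*} {μ : Ω → ℝ≥0∞} {ρ : Γ → ℝ≥0∞}

theorem lindley_moment_bound (hμ : ∑' q, μ q = 1) (hρ : ∑' a, ρ a = 1) (X : Ω → ℕ) (S : Γ → ℕ)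
    (hX : ∑' q, μ q * (X q : ℝ≥0∞) ^ 2 ≠ ⊤)
    (hdom : ∀ g : ℕ → ℝ≥0∞, Monotone g →
      ∑' q, μ q * ∑' a, ρ a * g (X q + S a - 1) ≤ ∑' q, μ q * g (X q)) :
    2 * (∑' q, μ q * (X q : ℝ≥0∞)) * ∑' a, ρ a * (S a : ℝ≥0∞) + ∑' a, ρ a * (S a : ℝ≥0∞) ^ 2 ≤
      2 * ∑' q, μ q * (X q : ℝ≥0∞) + ∑' a, ρ a * (S a : ℝ≥0∞) := by
  have hY : ∀ q a, ((X q : ℝ≥0∞) + S a) ^ 2 = ((X q + S a - 1 : ℕ) : ℝ≥0∞) ^ 2 +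
      ((X q + S a - 1 : ℕ) : ℝ≥0∞) + ((X q : ℝ≥0∞) + S a) := fun q a => by
    exact_mod_cast (Nat.sub_one_sq_add_sub_one_add_self (X q + S a)).symm
  refine (ENNReal.add_le_add_iff_left hX).1 ?_
  calc _ = ∑' q, μ q * ∑' a, ρ a * ((X q : ℝ≥0∞) + S a) ^ 2 :=
        (tsum_mul_tsum_mul_add_sq hμ hρ _ _).symm
    _ = ∑' q, μ q * ∑' a, ρ a * ((X q + S a - 1 : ℕ) : ℝ≥0∞) ^ 2 +
          ∑' q, μ q * ∑' a, ρ a * ((X q + S a - 1 : ℕ) : ℝ≥0∞) +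
          ∑' q, μ q * ∑' a, ρ a * ((X q : ℝ≥0∞) + S a) := by
        simp only [hY, mul_add, ENNReal.tsum_add]
    _ ≤ ∑' q, μ q * (X q : ℝ≥0∞) ^ 2 + ∑' q, μ q * (X q : ℝ≥0∞) +
          (∑' q, μ q * (X q : ℝ≥0∞) + ∑' a, ρ a * (S a : ℝ≥0∞)) := by
        rw [tsum_mul_tsum_mul_add hμ hρ]
        gcongr ?_ + ?_ + _
        · exact hdom (fun k => (k : ℝ≥0∞) ^ 2) fun _ _ h => pow_le_pow_left' (Nat.mono_cast h) 2
        · exact hdom (fun k => (k : ℝ≥0∞)) Nat.mono_cast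
    _ = _ := by ring

end Lindley

theorem ofReal_sub_le_sum_of_drift {ι : Type*} [Fintype ι] {ε : ℝ} (hε0 : 0 < ε) (hε1 : ε < 1)
    {T : ι → ℝ≥0∞} {s : ι → ℝ} (hs : ∀ i, 0 ≤ s i)
    (h : ∀ i, 2 * T i * ENNReal.ofReal (1 - ε) + (ENNReal.ofReal (s i) + ENNReal.ofReal (1 - ε) ^ 2)
      ≤ 2 * T i + ENNReal.ofReal (1 - ε)) :
    ENNReal.ofReal ((∑ i, s i) / (2 * ε) - Fintype.card ι * (1 - ε) / 2) ≤ ∑ i, T i := by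
  rcases eq_or_ne (∑ i, T i) ⊤ with htop | htop
  · rw [htop]; exact le_top
  have hT : ∀ i, T i ≠ ⊤ := fun i =>
    ne_top_of_le_ne_top htop (single_le_sum (fun _ _ => bot_le) (mem_univ i))
  have hrow : ∀ i, s i - ε * (1 - ε) ≤ 2 * ε * (T i).toReal := by
    intro i
    have hTi := hT i
    have := ENNReal.toReal_mono (by finiteness) (h i)
    repeat rw [ENNReal.toReal_add (by finiteness) (by finiteness)] at this
    simp only [ENNReal.toReal_mul, ENNReal.toReal_pow, ENNReal.toReal_ofReal (hs i),
      ENNReal.toReal_ofReal (sub_nonneg.2 hε1.le), ENNReal.toReal_ofNat] at this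
    nlinarith
  rw [ENNReal.ofReal_le_iff_le_toReal htop, ENNReal.toReal_sum fun i _ => hT i,
    sub_le_iff_le_add, div_le_iff₀ (by positivity)]
  have := sum_le_sum fun i (_ : i ∈ univ) => hrow i
  rw [sum_sub_distrib, sum_const, card_univ, nsmul_eq_mul, ← mul_sum] at this
  nlinarith

namespace SwitchModel

variable {n : ℕ}

theorem IsSchedule.rowSum_sub_one_le {s : Fin n → Fin n → ℕ} (hs : IsSchedule n s)
    (q a : Fin n → Fin n → ℕ) (i : Fin n) :
    ∑ j, q i j + ∑ j, a i j - 1 ≤ ∑ j, nextQ n q a s i j := by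
  rw [tsub_le_iff_right, ← sum_add_distrib]
  calc ∑ j, (q i j + a i j) ≤ ∑ j, (nextQ n q a s i j + s i j) :=
        sum_le_sum fun j _ => le_tsub_add
    _ ≤ ∑ j, nextQ n q a s i j + 1 := by rw [sum_add_distrib]; gcongr; exact hs.2.1 i

theorem IsInvariant.tsum_mul_tsum_mul {P : (Fin n → Fin n → ℕ) → (Fin n → Fin n → ℕ) → ℝ≥0∞}
    {pd : (Fin n → Fin n → ℕ) → ℝ≥0∞} (hpd : IsInvariant n P pd) (f : (Fin n → Fin n → ℕ) → ℝ≥0∞) :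
    ∑' q, pd q * ∑' q', P q q' * f q' = ∑' q, pd q * f q := by
  simp_rw [← ENNReal.tsum_mul_left, ← mul_assoc]
  rw [ENNReal.tsum_comm]
  simp_rw [ENNReal.tsum_mul_right, hpd.2]

theorem tsum_kernelPol_mul (A : Fin n → Fin n → ℕ → ℝ≥0∞)
    (pol : (Fin n → Fin n → ℕ) → (Fin n → Fin n → ℕ) → ℝ≥0∞) (q : Fin n → Fin n → ℕ)
    (f : (Fin n → Fin n → ℕ) → ℝ≥0∞) :
    ∑' q', kernelPol n A pol q q' * f q' =
      ∑' a, ∑' s, jointA n A a * pol q s * f (nextQ n q a s) := by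
  simp_rw [kernelPol, ← ENNReal.tsum_mul_right]
  rw [ENNReal.tsum_comm]
  refine tsum_congr fun a => ?_
  rw [ENNReal.tsum_comm]
  refine tsum_congr fun s => ?_
  simp [mul_ite, ite_mul]

theorem tsum_jointA_mul_le_tsum_kernelPol_mul (A : Fin n → Fin n → ℕ → ℝ≥0∞)
    {pol : (Fin n → Fin n → ℕ) → (Fin n → Fin n → ℕ) → ℝ≥0∞}
    (hpol1 : ∀ q, ∑' s, pol q s = 1) (hpol2 : ∀ q s, pol q s ≠ 0 → IsSchedule n s)
    {g : ℕ → ℝ≥0∞} (hg : Monotone g) (q : Fin n → Fin n → ℕ) (i : Fin n) :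
    ∑' a, jointA n A a * g (∑ j, q i j + ∑ j, a i j - 1) ≤
      ∑' q', kernelPol n A pol q q' * g (∑ j, q' i j) := by
  rw [tsum_kernelPol_mul]
  refine ENNReal.tsum_le_tsum fun a => ?_
  calc jointA n A a * g (∑ j, q i j + ∑ j, a i j - 1)
      = ∑' s, jointA n A a * pol q s * g (∑ j, q i j + ∑ j, a i j - 1) := by
        rw [ENNReal.tsum_mul_right, ENNReal.tsum_mul_left, hpol1, mul_one]
    _ ≤ _ := ENNReal.tsum_le_tsum fun s => by
        rcases eq_or_ne (pol q s) 0 with h | h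
        · simp [h]
        · exact mul_le_mul_right (hg ((hpol2 q s h).rowSum_sub_one_le q a i)) _


theorem IsInvariant.tsum_mul_tsum_jointA_mul_le {A : Fin n → Fin n → ℕ → ℝ≥0∞}
    {pol : (Fin n → Fin n → ℕ) → (Fin n → Fin n → ℕ) → ℝ≥0∞} {pd : (Fin n → Fin n → ℕ) → ℝ≥0∞}
    (hpd : IsInvariant n (kernelPol n A pol) pd)
    (hpol1 : ∀ q, ∑' s, pol q s = 1) (hpol2 : ∀ q s, pol q s ≠ 0 → IsSchedule n s)
    {g : ℕ → ℝ≥0∞} (hg : Monotone g) (i : Fin n) :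
    ∑' q, pd q * ∑' a, jointA n A a * g (∑ j, q i j + ∑ j, a i j - 1) ≤
      ∑' q, pd q * g (∑ j, q i j) := by
  rw [← hpd.tsum_mul_tsum_mul fun q => g (∑ j, q i j)]
  exact ENNReal.tsum_le_tsum fun q =>
    mul_le_mul_right (tsum_jointA_mul_le_tsum_kernelPol_mul A hpol1 hpol2 hg q i) _

theorem tsum_mul_rowSum_sq_le_Etot2 (pd : (Fin n → Fin n → ℕ) → ℝ≥0∞) (i : Fin n) :
    ∑' q, pd q * ((∑ j, q i j : ℕ) : ℝ≥0∞) ^ 2 ≤ Etot2 n pd :=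
  ENNReal.tsum_le_tsum fun q => by
    gcongr
    push_cast
    exact single_le_sum (f := fun i => ∑ j, (q i j : ℝ≥0∞)) (fun _ _ => bot_le) (mem_univ i)

theorem Etot_eq_sum (pd : (Fin n → Fin n → ℕ) → ℝ≥0∞) :
    Etot n pd = ∑ i, ∑' q, pd q * ((∑ j, q i j : ℕ) : ℝ≥0∞) := by
  rw [Etot, ← Summable.tsum_finsetSum fun _ _ => ENNReal.summable]
  simp_rw [Nat.cast_sum, mul_sum]

namespace ArrivalDist

variable {A : Fin n → Fin n → ℕ → ℝ≥0∞} {lam sig : Fin n → Fin n → ℝ} {amax : ℕ}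
  (hA : ArrivalDist n A lam sig amax)
include hA

theorem lam_nonneg (i j : Fin n) : 0 ≤ lam i j :=
  hA.2.2.1 i j ▸ tsum_nonneg fun k => mul_nonneg ENNReal.toReal_nonneg k.cast_nonneg

theorem tsum_mul_natCast (i j : Fin n) : ∑' k, A i j k * (k : ℝ≥0∞) = ENNReal.ofReal (lam i j) := by
  rw [tsum_mul_natCast_of_support_le (hA.1 i j ▸ ENNReal.one_ne_top) (hA.2.1 i j), hA.2.2.1 i j]

theorem tsum_mul_natCast_sq (i j : Fin n) :
    ∑' k, A i j k * (k : ℝ≥0∞) ^ 2 = ENNReal.ofReal (sig i j ^ 2) + ENNReal.ofReal (lam i j) ^ 2 :=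
  tsum_mul_natCast_sq_of_support_le (hA.1 i j) (hA.2.1 i j) (hA.2.2.1 i j) (hA.2.2.2 i j)

theorem tsum_prod_row (i : Fin n) : ∑' v : Fin n → ℕ, ∏ j, A i j (v j) = 1 := by
  simp [ENNReal.tsum_pi_prod, hA.1 i]

theorem tsum_jointA : ∑' a, jointA n A a = 1 := by
  simp [jointA, ENNReal.tsum_pi_prod fun i (v : Fin n → ℕ) => ∏ j, A i j (v j), hA.tsum_prod_row]

theorem tsum_jointA_mul_apply (i : Fin n) (G : (Fin n → ℕ) → ℝ≥0∞) :
    ∑' a, jointA n A a * G (a i) = ∑' v : Fin n → ℕ, (∏ j, A i j (v j)) * G v :=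
  ENNReal.tsum_pi_prod_mul_apply (h := fun i (v : Fin n → ℕ) => ∏ j, A i j (v j))
    hA.tsum_prod_row i G

theorem tsum_jointA_mul_rowSum (i : Fin n) :
    ∑' a, jointA n A a * ((∑ j, a i j : ℕ) : ℝ≥0∞) = ENNReal.ofReal (∑ j, lam i j) := by
  rw [hA.tsum_jointA_mul_apply i fun v => ((∑ j, v j : ℕ) : ℝ≥0∞)]
  push_cast
  rw [ENNReal.tsum_pi_prod_mul_sum (hA.1 i) fun _ k => (k : ℝ≥0∞),
    ENNReal.ofReal_sum_of_nonneg fun j _ => hA.lam_nonneg i j]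
  simp_rw [hA.tsum_mul_natCast]

theorem tsum_jointA_mul_rowSum_sq (i : Fin n) :
    ∑' a, jointA n A a * ((∑ j, a i j : ℕ) : ℝ≥0∞) ^ 2 =
      ENNReal.ofReal (∑ j, sig i j ^ 2) + ENNReal.ofReal (∑ j, lam i j) ^ 2 := by
  rw [hA.tsum_jointA_mul_apply i fun v => ((∑ j, v j : ℕ) : ℝ≥0∞) ^ 2]
  push_cast
  rw [ENNReal.tsum_pi_prod_mul_sum_sq (hA.1 i) (fun _ k => (k : ℝ≥0∞))
      (fun j => ENNReal.ofReal (sig i j ^ 2)) fun j => by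
        simp only [hA.tsum_mul_natCast_sq, hA.tsum_mul_natCast],
    ENNReal.ofReal_sum_of_nonneg fun j _ => hA.lam_nonneg i j,
    ENNReal.ofReal_sum_of_nonneg fun j _ => sq_nonneg (sig i j)]
  simp_rw [hA.tsum_mul_natCast]

end ArrivalDist

end SwitchModel

open SwitchModel

theorem universal_lower_bound_general
    (n : ℕ) (ε : ℝ) (hε0 : 0 < ε) (hε1 : ε < 1)
    (ν : Fin n → Fin n → ℝ) (hν : memF n ν)
    (sig : Fin n → Fin n → ℝ) (amax : ℕ)
    (A : Fin n → Fin n → ℕ → ℝ≥0∞)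
    (hA : ArrivalDist n A (fun i j => (1 - ε) * ν i j) sig amax)
    (pol : (Fin n → Fin n → ℕ) → (Fin n → Fin n → ℕ) → ℝ≥0∞)
    (hpol1 : ∀ q, (∑' s : Fin n → Fin n → ℕ, pol q s) = 1)
    (hpol2 : ∀ q s, pol q s ≠ 0 → IsSchedule n s)
    (pd : (Fin n → Fin n → ℕ) → ℝ≥0∞)
    (hpd : IsInvariant n (kernelPol n A pol) pd)
    (hfin : Etot2 n pd ≠ ⊤) :
    ENNReal.ofReal ((∑ i, ∑ j, (sig i j) ^ 2) / (2 * ε) - n * (1 - ε) / 2) ≤ Etot n pd := by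
  have hrow : ∀ i, ∑ j, (1 - ε) * ν i j = 1 - ε := fun i => by rw [← mul_sum, hν.2.1 i, mul_one]
  have hdrift := fun i => lindley_moment_bound hpd.1 hA.tsum_jointA (fun q => ∑ j, q i j)
    (fun a => ∑ j, a i j) (ne_top_of_le_ne_top hfin (tsum_mul_rowSum_sq_le_Etot2 pd i))
    fun _ hg => hpd.tsum_mul_tsum_jointA_mul_le hpol1 hpol2 hg i
  simp only [hA.tsum_jointA_mul_rowSum, hA.tsum_jointA_mul_rowSum_sq, hrow] at hdrift
  simpa [Etot_eq_sum] using
    ofReal_sub_le_sum_of_drift hε0 hε1 (fun i => sum_nonneg fun j _ => sq_nonneg (sig i j)) hdrift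

/-- Proposition 3.1, fixed-ε version: universal lower bound on the
steady-state expected total queue length under an arbitrary scheduling policy. -/
theorem universal_lower_bound
    (n : ℕ) (hn : 1 ≤ n) (ε : ℝ) (hε0 : 0 < ε) (hε1 : ε < 1)
    (ν : Fin n → Fin n → ℝ) (hν : memF n ν)
    (sig : Fin n → Fin n → ℝ) (amax : ℕ) (hamax : 1 ≤ amax)
    (A : Fin n → Fin n → ℕ → ℝ≥0∞)
    (hA : ArrivalDist n A (fun i j => (1 - ε) * ν i j) sig amax)
    (pol : (Fin n → Fin n → ℕ) → (Fin n → Fin n → ℕ) → ℝ≥0∞)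
    (hpol1 : ∀ q, (∑' s : Fin n → Fin n → ℕ, pol q s) = 1)
    (hpol2 : ∀ q s, pol q s ≠ 0 → IsSchedule n s)
    (pd : (Fin n → Fin n → ℕ) → ℝ≥0∞)
    (hpd : IsInvariant n (kernelPol n A pol) pd)
    (hfin : Etot2 n pd ≠ ⊤) :
    ENNReal.ofReal ((∑ i, ∑ j, (sig i j) ^ 2) / (2 * ε) - n * (1 - ε) / 2) ≤ Etot n pd :=
  universal_lower_bound_general n ε hε0 hε1 ν hν sig amax A hA pol hpol1 hpol2 pd hpd hfin
end

section
/- Feasibility of the perturbed rate vector (Claim inside the proof of Proposition 4.2). Let n ≥ 1 and let ν ∈ F with ν_min := min_{ij} ν_{ij} > 0. Let q ∈ ℝ^{n×n}, let q_∥ be the unique nearest point of the closed convex cone K to q, and q_⊥ = q − q_∥; assume q_⊥ ≠ 0. Then the matrix ν + (ν_min/‖q_⊥‖)·q_⊥ belongs to the capacity region C, i.e., it is entrywise nonnegative and all of its row sums and column sums are at most 1. -/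
open scoped BigOperators ENNReal

open SwitchModel

lemma cone_key (n : ℕ) (q qpar : Fin n → Fin n → ℝ)
    (hpar : qpar ∈ coneK n ∧ ∀ y ∈ coneK n, normE n (q - qpar) ≤ normE n (q - y))
    (y : Fin n → Fin n → ℝ)
    (hy : ∀ t : ℝ, 0 < t → qpar + t • y ∈ coneK n) :
    (∑ i, ∑ j, (q - qpar) i j * y i j) ≤ 0 := by
  set u := q - qpar with hu
  set S := ∑ i, ∑ j, u i j * y i j with hS
  set Y := ∑ i, ∑ j, y i j ^ 2 with hY
  have hYnn : 0 ≤ Y := Finset.sum_nonneg fun i _ => Finset.sum_nonneg fun j _ => sq_nonneg _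
  have hkey : ∀ t : ℝ, 0 < t → 2 * t * S ≤ t ^ 2 * Y := by
    intro t ht
    have h1 := hpar.2 (qpar + t • y) (hy t ht)
    have hA : (0:ℝ) ≤ ∑ i, ∑ j, u i j ^ 2 :=
      Finset.sum_nonneg fun i _ => Finset.sum_nonneg fun j _ => sq_nonneg _
    have h2 : (∑ i, ∑ j, u i j ^ 2) ≤ ∑ i, ∑ j, (u i j - t * y i j) ^ 2 := by
      by_contra hc
      push_neg at hc
      have hB : (0:ℝ) ≤ ∑ i, ∑ j, (u i j - t * y i j) ^ 2 :=
        Finset.sum_nonneg fun i _ => Finset.sum_nonneg fun j _ => sq_nonneg _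
      have : normE n (q - (qpar + t • y)) < normE n u := by
        have heq : (q - (qpar + t • y)) = fun i j => u i j - t * y i j := by
          funext i j; simp [hu]; ring
        rw [normE, normE, heq]
        exact Real.sqrt_lt_sqrt hB hc
      exact absurd h1 (not_le.mpr this)
    have hexp : (∑ i, ∑ j, (u i j - t * y i j) ^ 2)
        = (∑ i, ∑ j, u i j ^ 2) - 2 * t * S + t ^ 2 * Y := by
      simp only [hS, hY, Finset.mul_sum, ← Finset.sum_sub_distrib, ← Finset.sum_add_distrib]
      refine Finset.sum_congr rfl fun i _ => Finset.sum_congr rfl fun j _ => ?_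
      ring
    rw [hexp] at h2
    linarith
  by_contra hc
  push_neg at hc
  have ht : 0 < S / (Y + 1) := div_pos hc (by linarith)
  have := hkey (S / (Y + 1)) ht
  have hY1 : (0:ℝ) < Y + 1 := by linarith
  rw [div_pow] at this
  have e1 : 2 * (S / (Y + 1)) * S * (Y+1)^2 = 2 * S^2 * (Y+1) := by field_simp
  have e2 : S ^ 2 / (Y + 1) ^ 2 * Y * (Y+1)^2 = S^2 * Y := by field_simp
  have h4 : 2 * S^2 * (Y+1) ≤ S^2 * Y := by
    rw [← e1, ← e2]; exact mul_le_mul_of_nonneg_right this (sq_nonneg _)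
  nlinarith [mul_pos hc hc]


/-- Claim inside the proof of Proposition 4.2: the perturbed rate vector
`ν + (ν_min/‖q_⊥‖)·q_⊥` lies in the capacity region `C`. -/
theorem perturbed_rate_feasible
    (n : ℕ) (hn : 1 ≤ n)
    (ν : Fin n → Fin n → ℝ) (hν : memF n ν)
    (νmin : ℝ) (hνmin : IsLeast {x : ℝ | ∃ i j : Fin n, ν i j = x} νmin)
    (hνminpos : 0 < νmin)
    (q qpar : Fin n → Fin n → ℝ)
    (hpar : qpar ∈ coneK n ∧ ∀ y ∈ coneK n, normE n (q - qpar) ≤ normE n (q - y))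
    (hne : q - qpar ≠ 0) :
    (∀ i j, 0 ≤ ν i j + νmin / normE n (q - qpar) * (q - qpar) i j) ∧
    (∀ i, (∑ j, (ν i j + νmin / normE n (q - qpar) * (q - qpar) i j)) ≤ 1) ∧
    (∀ j, (∑ i, (ν i j + νmin / normE n (q - qpar) * (q - qpar) i j)) ≤ 1) := by
  set u := q - qpar with hu
  set N := normE n u with hNdef
  -- positivity of the norm
  obtain ⟨i0, hi0⟩ := Function.ne_iff.mp hne
  obtain ⟨j0, hj0⟩ := Function.ne_iff.mp hi0
  have hsum_nn : (0:ℝ) ≤ ∑ i, ∑ j, u i j ^ 2 :=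
    Finset.sum_nonneg fun i _ => Finset.sum_nonneg fun j _ => sq_nonneg _
  have hj0' : u i0 j0 ≠ 0 := by simpa using hj0
  have hsum_pos : (0:ℝ) < ∑ i, ∑ j, u i j ^ 2 := by
    have h1 : (0:ℝ) < u i0 j0 ^ 2 := by
      rcases lt_or_gt_of_ne hj0' with h | h <;> nlinarith
    have h2 : u i0 j0 ^ 2 ≤ ∑ j, u i0 j ^ 2 :=
      Finset.single_le_sum (f := fun j => u i0 j ^ 2) (fun j _ => sq_nonneg _)
        (Finset.mem_univ j0)
    have h3 : (∑ j, u i0 j ^ 2) ≤ ∑ i, ∑ j, u i j ^ 2 :=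
      Finset.single_le_sum (f := fun i => ∑ j, u i j ^ 2)
        (fun i _ => Finset.sum_nonneg fun j _ => sq_nonneg _) (Finset.mem_univ i0)
    linarith
  have hNpos : 0 < N := by
    rw [hNdef, normE]
    exact Real.sqrt_pos.mpr hsum_pos
  have hN2 : N ^ 2 = ∑ i, ∑ j, u i j ^ 2 := by
    rw [hNdef, normE, Real.sq_sqrt hsum_nn]
  have hcnn : 0 ≤ νmin / N := le_of_lt (div_pos hνminpos hNpos)
  have hlb : ∀ i j, -N ≤ u i j := by
    intro i j
    have h2 : u i j ^ 2 ≤ ∑ jj, u i jj ^ 2 :=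
      Finset.single_le_sum (f := fun jj => u i jj ^ 2) (fun jj _ => sq_nonneg _)
        (Finset.mem_univ j)
    have h3 : (∑ jj, u i jj ^ 2) ≤ ∑ ii, ∑ jj, u ii jj ^ 2 :=
      Finset.single_le_sum (f := fun ii => ∑ jj, u ii jj ^ 2)
        (fun ii _ => Finset.sum_nonneg fun jj _ => sq_nonneg _) (Finset.mem_univ i)
    nlinarith
  have hνlb : ∀ i j, νmin ≤ ν i j := fun i j => hνmin.2 ⟨i, j, rfl⟩
  refine ⟨?_, ?_, ?_⟩
  · intro i j
    have h := hlb i j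
    have : νmin / N * u i j ≥ νmin / N * (-N) := by
      exact mul_le_mul_of_nonneg_left h hcnn
    have hdn : νmin / N * (-N) = -νmin := by field_simp
    have := hνlb i j
    nlinarith [mul_le_mul_of_nonneg_left (hlb i j) hcnn]
  · intro i
    have hrow : (∑ j, u i j) ≤ 0 := by
      have hk := cone_key n q qpar hpar (fun k _ => if k = i then 1 else 0) ?_
      · have heq : (∑ k : Fin n, ∑ j : Fin n, (q - qpar) k j * (if k = i then (1:ℝ) else 0))
            = ∑ j, u i j := by
          have hterm : ∀ k : Fin n, (∑ j : Fin n, (q - qpar) k j * (if k = i then (1:ℝ) else 0))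
              = if k = i then (∑ j, u i j) else 0 := by
            intro k
            by_cases hki : k = i
            · subst hki; simp [hu]
            · simp [hki]
          rw [Finset.sum_congr rfl fun k _ => hterm k,
            Finset.sum_ite_eq' Finset.univ i fun _ => ∑ j, u i j]
          simp
        rw [heq] at hk
        exact hk
      · intro t ht
        obtain ⟨w, wt, hw, hwt, hql⟩ := hpar.1
        refine ⟨fun k => w k + (if k = i then t else 0), wt, ?_, hwt, ?_⟩
        · intro k
          have := hw k
          show 0 ≤ w k + if k = i then t else 0
          by_cases hk : k = i
          · rw [if_pos hk]; linarith
          · rw [if_neg hk]; linarith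
        · intro k j
          simp only [Pi.add_apply, Pi.smul_apply, smul_eq_mul]
          rw [hql k j]
          by_cases hk : k = i
          · rw [if_pos hk, if_pos hk]; ring
          · rw [if_neg hk, if_neg hk]; ring
    have hsplit : (∑ j, (ν i j + νmin / N * u i j)) = 1 + νmin / N * (∑ j, u i j) := by
      rw [Finset.sum_add_distrib, hν.2.1 i, ← Finset.mul_sum]
    rw [hsplit]
    nlinarith [mul_le_mul_of_nonneg_left hrow hcnn]
  · intro j
    have hcol : (∑ i, u i j) ≤ 0 := by
      have hk := cone_key n q qpar hpar (fun _ jj => if jj = j then 1 else 0) ?_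
      · have heq : (∑ i : Fin n, ∑ jj : Fin n, (q - qpar) i jj * (if jj = j then (1:ℝ) else 0))
            = ∑ i, u i j := by
          refine Finset.sum_congr rfl fun i _ => ?_
          have hterm : ∀ jj : Fin n, (q - qpar) i jj * (if jj = j then (1:ℝ) else 0)
              = if jj = j then u i jj else 0 := by
            intro jj
            by_cases hj : jj = j <;> simp [hj, hu]
          rw [Finset.sum_congr rfl fun jj _ => hterm jj,
            Finset.sum_ite_eq' Finset.univ j fun jj => u i jj]
          simp
        rw [heq] at hk
        exact hk
      · intro t ht
        obtain ⟨w, wt, hw, hwt, hql⟩ := hpar.1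
        refine ⟨w, fun jj => wt jj + (if jj = j then t else 0), hw, ?_, ?_⟩
        · intro jj
          have := hwt jj
          show 0 ≤ wt jj + if jj = j then t else 0
          by_cases hj : jj = j
          · rw [if_pos hj]; linarith
          · rw [if_neg hj]; linarith
        · intro i jj
          simp only [Pi.add_apply, Pi.smul_apply, smul_eq_mul]
          rw [hql i jj]
          by_cases hj : jj = j
          · rw [if_pos hj, if_pos hj]; ring
          · rw [if_neg hj, if_neg hj]; ring
    have hsplit : (∑ i, (ν i j + νmin / N * u i j)) = 1 + νmin / N * (∑ i, u i j) := by
      rw [Finset.sum_add_distrib, hν.2.2 j, ← Finset.mul_sum]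
    rw [hsplit]
    nlinarith [mul_le_mul_of_nonneg_left hcol hcnn]
end

section
/- Geometric tail bound for the stationary distribution from drift conditions (Lemma 2.3, first part). Let X be a countable set, P a Markov transition kernel on X (P(x) is a probability distribution on X for each x), and Z : X → ℝ_{≥0}. Assume: (C1) there exist η > 0 and κ < ∞ such that for all x with Z(x) ≥ κ, ∑_{y} P(x)(y)·Z(y) − Z(x) ≤ −η; (C2) there exists D < ∞ such that |Z(y) − Z(x)| ≤ D whenever P(x)(y) > 0. Let π be a probability distribution on X invariant for P (π = πP). Then for every integer m ≥ 0: π({x : Z(x) > κ + 2Dm}) ≤ (D/(D+η))^{m+1}. -/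
/-!
Test the invariant distribution `pd` against the excess `g = (Z - L)⁺` of `Z` over a level `L`.
Invariance gives `pd (P g) = pd g`, while by (C1) and (C2) one step of the chain lowers `g` by `η`
on average where `Z > L + D`, raises it by at most `D` on the band `L - D < Z ≤ L + D`, and keeps
it `0` below the band. Hence `η · pd(Z > L + D) ≤ D · pd(L - D < Z ≤ L + D)`, that is
`pd(Z > L + D) ≤ D / (D + η) · pd(Z > L - D)`, and iterating in steps of `2D` from `L = κ - D`
gives the geometric bound. As `pd g` may be infinite, `g` is capped at `c` first and `c → ∞` by
monotone convergence.
-/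

open scoped ENNReal

theorem ENNReal.tsum_iSup_of_monotone {α : Type*} {f : ℕ → α → ℝ≥0∞} (hf : Monotone f) :
    ∑' a, ⨆ n, f n a = ⨆ n, ∑' a, f n a := by
  simp_rw [ENNReal.tsum_eq_iSup_sum,
    ENNReal.finsetSum_iSup_of_monotone fun a _ _ hmn => hf hmn a]
  exact iSup_comm

theorem tsum_mul_indicator_const {α : Type*} (f : α → ℝ≥0∞) (s : Set α) (c : ℝ≥0∞) :
    ∑' a, f a * s.indicator (fun _ => c) a = c * ∑' a, s.indicator f a := by
  simp_rw [← Set.indicator_mul_right, Set.indicator_mul_left, ENNReal.tsum_mul_right, mul_comm]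

section ProbabilityMass

variable {α : Type*} {p : α → ℝ≥0∞}

theorem tsum_mul_le_of_forall_ne_zero_le (hp : ∑' a, p a = 1) {f : α → ℝ≥0∞} {b : ℝ≥0∞}
    (hf : ∀ a, p a ≠ 0 → f a ≤ b) : ∑' a, p a * f a ≤ b :=
  calc ∑' a, p a * f a ≤ ∑' a, p a * b := ENNReal.tsum_le_tsum fun a => by
        rcases eq_or_ne (p a) 0 with ha | ha
        · simp [ha]
        · exact mul_le_mul_right (hf a ha) _
    _ = b := by rw [ENNReal.tsum_mul_right, hp, one_mul]

theorem tsum_indicator_le_one (hp : ∑' a, p a = 1) (s : Set α) : ∑' a, s.indicator p a ≤ 1 :=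
  hp ▸ ENNReal.tsum_le_tsum (s.indicator_le_self p)

theorem tsum_mul_ofReal_sub_add_le (hp : ∑' a, p a = 1) {f : α → ℝ} {b c ε : ℝ} (hb : 0 ≤ b)
    (hf : ∀ a, p a ≠ 0 → c ≤ f a)
    (h : ∑' a, p a * ENNReal.ofReal (f a) + ENNReal.ofReal ε ≤ ENNReal.ofReal b) :
    ∑' a, p a * ENNReal.ofReal (f a - c) + ENNReal.ofReal ε ≤ ENNReal.ofReal (b - c) := by
  rcases le_or_gt 0 c with hc | hc
  · have hsplit : ∑' a, p a * ENNReal.ofReal (f a - c) + ENNReal.ofReal c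
        = ∑' a, p a * ENNReal.ofReal (f a) := by
      rw [← one_mul (ENNReal.ofReal c), ← hp, ← ENNReal.tsum_mul_right, ← ENNReal.tsum_add]
      refine tsum_congr fun a => ?_
      rcases eq_or_ne (p a) 0 with ha | ha
      · simp [ha]
      · rw [← mul_add, ← ENNReal.ofReal_add (sub_nonneg.2 (hf a ha)) hc, sub_add_cancel]
    rw [← ENNReal.add_le_add_iff_right ENNReal.ofReal_ne_top, add_right_comm, hsplit]
    calc _ ≤ ENNReal.ofReal b := h
      _ = ENNReal.ofReal (b - c + c) := by rw [sub_add_cancel]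
      _ ≤ _ := ENNReal.ofReal_add_le
  · calc ∑' a, p a * ENNReal.ofReal (f a - c) + ENNReal.ofReal ε
        ≤ ∑' a, p a * (ENNReal.ofReal (f a) + ENNReal.ofReal (-c)) + ENNReal.ofReal ε := by
          gcongr with a
          rw [sub_eq_add_neg]
          exact ENNReal.ofReal_add_le
      _ = ∑' a, p a * ENNReal.ofReal (f a) + ENNReal.ofReal ε + ENNReal.ofReal (-c) := by
          simp_rw [mul_add]
          rw [ENNReal.tsum_add, ENNReal.tsum_mul_right, hp, one_mul, add_right_comm]
      _ ≤ ENNReal.ofReal b + ENNReal.ofReal (-c) := by gcongr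
      _ = ENNReal.ofReal (b - c) := by
          rw [← ENNReal.ofReal_add hb (by linarith), sub_eq_add_neg]

end ProbabilityMass

section Invariance

variable {X : Type*} {P : X → X → ℝ≥0∞} {pd : X → ℝ≥0∞}

theorem tsum_mul_tsum_kernel_eq_of_invariant (hpd : ∀ y, ∑' x, pd x * P x y = pd y)
    (g : X → ℝ≥0∞) : ∑' x, pd x * ∑' y, P x y * g y = ∑' x, pd x * g x :=
  calc ∑' x, pd x * ∑' y, P x y * g y = ∑' y, ∑' x, pd x * P x y * g y := by
        simp_rw [← ENNReal.tsum_mul_left, mul_assoc]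
        exact ENNReal.tsum_comm
    _ = ∑' y, pd y * g y := by simp_rw [ENNReal.tsum_mul_right, hpd]

theorem tsum_mul_le_tsum_mul_of_invariant (hpd : ∀ y, ∑' x, pd x * P x y = pd y)
    {g u v : X → ℝ≥0∞} (hg : ∑' x, pd x * g x ≠ ∞)
    (h : ∀ x, ∑' y, P x y * g y + u x ≤ g x + v x) :
    ∑' x, pd x * u x ≤ ∑' x, pd x * v x := by
  have hsum := ENNReal.tsum_le_tsum fun x => mul_le_mul_right (h x) (pd x)
  simp_rw [mul_add] at hsum
  rwa [ENNReal.tsum_add, ENNReal.tsum_add, tsum_mul_tsum_kernel_eq_of_invariant hpd,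
    ENNReal.add_le_add_iff_left hg] at hsum

end Invariance

def cappedExcess (L c z : ℝ) : ℝ≥0∞ := ENNReal.ofReal (min (z - L) c)

namespace cappedExcess

variable {L c z w : ℝ}

theorem eq_zero_of_le (h : z ≤ L) : cappedExcess L c z = 0 :=
  ENNReal.ofReal_eq_zero.2 ((min_le_left _ _).trans (by linarith))

theorem le_ofReal_sub : cappedExcess L c z ≤ ENNReal.ofReal (z - L) :=
  ENNReal.ofReal_le_ofReal (min_le_left _ _)

theorem le_cap : cappedExcess L c z ≤ ENNReal.ofReal c :=
  ENNReal.ofReal_le_ofReal (min_le_right _ _)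

theorem eq_of_le_cap (h : z ≤ L + c) : cappedExcess L c z = ENNReal.ofReal (z - L) := by
  rw [cappedExcess, min_eq_left (by linarith)]

theorem eq_of_cap_le (h : L + c ≤ z) : cappedExcess L c z = ENNReal.ofReal c := by
  rw [cappedExcess, min_eq_right (by linarith)]

theorem le_add {D : ℝ} (hD : 0 ≤ D) (h : z ≤ w + D) :
    cappedExcess L c z ≤ cappedExcess L c w + ENNReal.ofReal D :=
  calc cappedExcess L c z ≤ ENNReal.ofReal (min (w - L) c + D) := by
        refine ENNReal.ofReal_le_ofReal ?_
        rcases min_cases (w - L) c with ⟨hm, -⟩ | ⟨hm, -⟩ <;> rw [hm]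
        · exact (min_le_left _ _).trans (by linarith)
        · exact (min_le_right _ _).trans (by linarith)
    _ ≤ _ := ENNReal.ofReal_add_le

end cappedExcess

section Drift

variable {X : Type*} {P : X → X → ℝ≥0∞} {Z : X → ℝ} {η κ D : ℝ}

theorem kernel_cappedExcess_eq_zero (hP : ∀ x, ∑' y, P x y = 1)
    (hC2 : ∀ x y, P x y ≠ 0 → |Z y - Z x| ≤ D) {L : ℝ} (c : ℝ) {x : X} (hx : Z x + D ≤ L) :
    ∑' y, P x y * cappedExcess L c (Z y) = 0 :=
  nonpos_iff_eq_zero.1 <| tsum_mul_le_of_forall_ne_zero_le (hP x) fun y hy =>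
    (cappedExcess.eq_zero_of_le (by linarith [(abs_le.1 (hC2 x y hy)).2])).le

theorem kernel_cappedExcess_le (hP : ∀ x, ∑' y, P x y = 1) (hD : 0 ≤ D)
    (hC2 : ∀ x y, P x y ≠ 0 → |Z y - Z x| ≤ D) (L c : ℝ) (x : X) :
    ∑' y, P x y * cappedExcess L c (Z y) ≤ cappedExcess L c (Z x) + ENNReal.ofReal D :=
  tsum_mul_le_of_forall_ne_zero_le (hP x) fun y hy =>
    cappedExcess.le_add hD (by linarith [(abs_le.1 (hC2 x y hy)).2])

theorem kernel_cappedExcess_add_le (hP : ∀ x, ∑' y, P x y = 1) (hZ0 : ∀ x, 0 ≤ Z x)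
    (hC1 : ∀ x, κ ≤ Z x →
      (∑' y, P x y * ENNReal.ofReal (Z y)) + ENNReal.ofReal η ≤ ENNReal.ofReal (Z x))
    (hC2 : ∀ x y, P x y ≠ 0 → |Z y - Z x| ≤ D) {L : ℝ} (c : ℝ) {x : X} (hκ : κ ≤ Z x)
    (hx : L + D ≤ Z x) :
    ∑' y, P x y * cappedExcess L c (Z y) + ENNReal.ofReal η ≤ ENNReal.ofReal (Z x - L) :=
  calc ∑' y, P x y * cappedExcess L c (Z y) + ENNReal.ofReal η
      ≤ ∑' y, P x y * ENNReal.ofReal (Z y - L) + ENNReal.ofReal η := by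
        gcongr with y
        exact cappedExcess.le_ofReal_sub
    _ ≤ ENNReal.ofReal (Z x - L) :=
        tsum_mul_ofReal_sub_add_le (hP x) (hZ0 x)
          (fun y hy => by linarith [(abs_le.1 (hC2 x y hy)).1]) (hC1 x hκ)

theorem kernel_cappedExcess_add_indicator_le (hP : ∀ x, ∑' y, P x y = 1) (hZ0 : ∀ x, 0 ≤ Z x)
    (hD : 0 ≤ D)
    (hC1 : ∀ x, κ ≤ Z x →
      (∑' y, P x y * ENNReal.ofReal (Z y)) + ENNReal.ofReal η ≤ ENNReal.ofReal (Z x))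
    (hC2 : ∀ x y, P x y ≠ 0 → |Z y - Z x| ≤ D) {L : ℝ} (hL : κ ≤ L + D) (c : ℝ) (x : X) :
    ∑' y, P x y * cappedExcess L c (Z y)
        + {x | L + D < Z x ∧ Z x ≤ L + c}.indicator (fun _ => ENNReal.ofReal η) x
      ≤ cappedExcess L c (Z x)
        + {x | L - D < Z x ∧ Z x ≤ L + D}.indicator (fun _ => ENNReal.ofReal D) x := by
  simp only [Set.indicator_apply, Set.mem_ofPred_eq]
  rcases le_or_gt (Z x) (L + D) with hlow | hhigh
  · rw [if_neg (show ¬(L + D < Z x ∧ Z x ≤ L + c) from fun h => h.1.not_ge hlow), add_zero]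
    split_ifs with hband
    · exact kernel_cappedExcess_le hP hD hC2 L c x
    · rw [kernel_cappedExcess_eq_zero hP hC2 c (by linarith [not_lt.1 fun h => hband ⟨h, hlow⟩])]
      exact zero_le
  · rw [if_neg (show ¬(L - D < Z x ∧ Z x ≤ L + D) from fun h => h.2.not_gt hhigh), add_zero]
    split_ifs with hcap
    · rw [cappedExcess.eq_of_le_cap hcap.2]
      exact kernel_cappedExcess_add_le hP hZ0 hC1 hC2 c (by linarith) hhigh.le
    · rw [add_zero, cappedExcess.eq_of_cap_le (not_le.1 fun h => hcap ⟨hhigh, h⟩).le]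
      exact tsum_mul_le_of_forall_ne_zero_le (hP x) fun _ _ => cappedExcess.le_cap

end Drift

section Stationary

variable {X : Type*} {P : X → X → ℝ≥0∞} {Z : X → ℝ} {η κ D : ℝ} {pd : X → ℝ≥0∞}

theorem ofReal_mul_tsum_indicator_capped_le (hP : ∀ x, ∑' y, P x y = 1)
    (hZ0 : ∀ x, 0 ≤ Z x) (hD : 0 ≤ D)
    (hC1 : ∀ x, κ ≤ Z x →
      (∑' y, P x y * ENNReal.ofReal (Z y)) + ENNReal.ofReal η ≤ ENNReal.ofReal (Z x))
    (hC2 : ∀ x y, P x y ≠ 0 → |Z y - Z x| ≤ D) (hpd1 : (∑' x, pd x) = 1)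
    (hpd2 : ∀ y, (∑' x, pd x * P x y) = pd y) {L : ℝ} (hL : κ ≤ L + D) (c : ℝ) :
    ENNReal.ofReal η * ∑' x, {x | L + D < Z x ∧ Z x ≤ L + c}.indicator pd x
      ≤ ENNReal.ofReal D * ∑' x, {x | L - D < Z x ∧ Z x ≤ L + D}.indicator pd x := by
  simp_rw [← tsum_mul_indicator_const]
  refine tsum_mul_le_tsum_mul_of_invariant hpd2 (g := fun x => cappedExcess L c (Z x)) ?_
    (kernel_cappedExcess_add_indicator_le hP hZ0 hD hC1 hC2 hL c)
  exact ne_top_of_le_ne_top ENNReal.ofReal_ne_top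
    (tsum_mul_le_of_forall_ne_zero_le hpd1 fun _ _ => cappedExcess.le_cap)

theorem ofReal_mul_tsum_indicator_le (hP : ∀ x, ∑' y, P x y = 1)
    (hZ0 : ∀ x, 0 ≤ Z x) (hD : 0 ≤ D)
    (hC1 : ∀ x, κ ≤ Z x →
      (∑' y, P x y * ENNReal.ofReal (Z y)) + ENNReal.ofReal η ≤ ENNReal.ofReal (Z x))
    (hC2 : ∀ x y, P x y ≠ 0 → |Z y - Z x| ≤ D) (hpd1 : (∑' x, pd x) = 1)
    (hpd2 : ∀ y, (∑' x, pd x * P x y) = pd y) {L : ℝ} (hL : κ ≤ L + D) :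
    ENNReal.ofReal η * ∑' x, {x | L + D < Z x}.indicator pd x
      ≤ ENNReal.ofReal D * ∑' x, {x | L - D < Z x ∧ Z x ≤ L + D}.indicator pd x := by
  have hiUnion : ∀ x, {x | L + D < Z x}.indicator pd x
      = ⨆ n : ℕ, {x | L + D < Z x ∧ Z x ≤ L + n}.indicator pd x := by
    intro x
    rw [← Set.indicator_iUnion_apply rfl]
    congr 1
    ext y
    simpa using fun _ => (exists_nat_ge (Z y - L)).imp fun n hn => by linarith
  have hmono : Monotone fun n : ℕ => {x | L + D < Z x ∧ Z x ≤ L + n}.indicator pd :=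
    fun m n hmn => Set.indicator_le_indicator_of_subset
      (fun y (hy : L + D < Z y ∧ Z y ≤ L + m) => ⟨hy.1, hy.2.trans (by gcongr)⟩) fun _ => zero_le
  rw [tsum_congr hiUnion, ENNReal.tsum_iSup_of_monotone hmono, ENNReal.mul_iSup]
  exact iSup_le fun n => ofReal_mul_tsum_indicator_capped_le hP hZ0 hD hC1 hC2 hpd1 hpd2 hL n

theorem tail_add_le_mul_tail_sub (hP : ∀ x, ∑' y, P x y = 1)
    (hZ0 : ∀ x, 0 ≤ Z x) (hη : 0 < η) (hD : 0 ≤ D)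
    (hC1 : ∀ x, κ ≤ Z x →
      (∑' y, P x y * ENNReal.ofReal (Z y)) + ENNReal.ofReal η ≤ ENNReal.ofReal (Z x))
    (hC2 : ∀ x y, P x y ≠ 0 → |Z y - Z x| ≤ D) (hpd1 : (∑' x, pd x) = 1)
    (hpd2 : ∀ y, (∑' x, pd x * P x y) = pd y) {L : ℝ} (hL : κ ≤ L + D) :
    ∑' x, {x | L + D < Z x}.indicator pd x
      ≤ ENNReal.ofReal (D / (D + η)) * ∑' x, {x | L - D < Z x}.indicator pd x := by
  set T := ∑' x, {x | L + D < Z x}.indicator pd x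
  set B := ∑' x, {x | L - D < Z x ∧ Z x ≤ L + D}.indicator pd x
  have hsplit : ∑' x, {x | L - D < Z x}.indicator pd x = T + B := by
    rw [← ENNReal.tsum_add]
    refine tsum_congr fun x => ?_
    simp only [Set.indicator_apply, Set.mem_ofPred_eq]
    split_ifs <;> grind
  have hDη : 0 < D + η := by linarith
  rw [ENNReal.ofReal_div_of_pos hDη, ← ENNReal.mul_div_right_comm, ENNReal.le_div_iff_mul_le
    (Or.inl (ENNReal.ofReal_pos.2 hDη).ne') (Or.inl ENNReal.ofReal_ne_top), hsplit]
  calc T * ENNReal.ofReal (D + η) = ENNReal.ofReal D * T + ENNReal.ofReal η * T := by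
        rw [ENNReal.ofReal_add hD hη.le]; ring
    _ ≤ ENNReal.ofReal D * T + ENNReal.ofReal D * B :=
        add_le_add le_rfl (ofReal_mul_tsum_indicator_le hP hZ0 hD hC1 hC2 hpd1 hpd2 hL)
    _ = ENNReal.ofReal D * (T + B) := (mul_add _ _ _).symm

end Stationary

theorem stationary_geometric_tail_bound_general
    {X : Type*}
    (P : X → X → ℝ≥0∞) (hP : ∀ x, (∑' y, P x y) = 1)
    (Z : X → ℝ) (hZ0 : ∀ x, 0 ≤ Z x)
    (η κ D : ℝ) (hη : 0 < η) (hD : 0 ≤ D)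
    (hC1 : ∀ x, κ ≤ Z x →
      (∑' y, P x y * ENNReal.ofReal (Z y)) + ENNReal.ofReal η ≤ ENNReal.ofReal (Z x))
    (hC2 : ∀ x y, P x y ≠ 0 → |Z y - Z x| ≤ D)
    (pd : X → ℝ≥0∞) (hpd1 : (∑' x, pd x) = 1)
    (hpd2 : ∀ y, (∑' x, pd x * P x y) = pd y)
    (m : ℕ) :
    (∑' x : {x : X // κ + 2 * D * m < Z x}, pd x.1) ≤
      ENNReal.ofReal ((D / (D + η)) ^ (m + 1)) := by
  set r := ENNReal.ofReal (D / (D + η))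
  have hstep : ∀ L, κ ≤ L + D → ∑' x, {x | L + D < Z x}.indicator pd x
      ≤ r * ∑' x, {x | L - D < Z x}.indicator pd x :=
    fun L hL => tail_add_le_mul_tail_sub hP hZ0 hη hD hC1 hC2 hpd1 hpd2 hL
  have htail : ∀ k : ℕ, ∑' x, {x | κ + 2 * D * k < Z x}.indicator pd x ≤ r ^ (k + 1) := by
    intro k
    induction k with
    | zero =>
      calc _ ≤ r * ∑' x, {x | κ - D - D < Z x}.indicator pd x := by
            simpa using hstep (κ - D) (by linarith)
        _ ≤ r ^ (0 + 1) := by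
            rw [zero_add, pow_one]
            exact mul_le_of_le_one_right' (tsum_indicator_le_one hpd1 _)
    | succ k ih =>
      have hlevel : κ + 2 * D * k + D + D = κ + 2 * D * (k + 1 : ℕ) := by push_cast; ring
      calc _ ≤ r * ∑' x, {x | κ + 2 * D * k < Z x}.indicator pd x := by
            simpa only [hlevel, add_sub_cancel_right] using
              hstep (κ + 2 * D * k + D) (by nlinarith [k.cast_nonneg (α := ℝ)])
        _ ≤ r * r ^ (k + 1) := mul_le_mul_right ih r
        _ = r ^ (k + 1 + 1) := (pow_succ' r _).symm
  rw [ENNReal.ofReal_pow (by positivity)]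
  exact (tsum_subtype {x | κ + 2 * D * m < Z x} pd).trans_le (htail m)

/-- Lemma 2.3, first part: geometric tail bound for the stationary
distribution of a Markov chain from drift conditions (C1) and (C2).  Condition (C1) is
stated as `E[Z(next)] + η ≤ Z(x)` (in `ℝ≥0∞`), which is exactly
`E[Z(next)] − Z(x) ≤ −η` with a finite expectation. -/
theorem stationary_geometric_tail_bound
    {X : Type*} [Countable X]
    (P : X → X → ℝ≥0∞) (hP : ∀ x, (∑' y, P x y) = 1)
    (Z : X → ℝ) (hZ0 : ∀ x, 0 ≤ Z x)
    (η κ D : ℝ) (hη : 0 < η) (hD : 0 ≤ D)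
    (hC1 : ∀ x, κ ≤ Z x →
      (∑' y, P x y * ENNReal.ofReal (Z y)) + ENNReal.ofReal η ≤ ENNReal.ofReal (Z x))
    (hC2 : ∀ x y, P x y ≠ 0 → |Z y - Z x| ≤ D)
    (pd : X → ℝ≥0∞) (hpd1 : (∑' x, pd x) = 1)
    (hpd2 : ∀ y, (∑' x, pd x * P x y) = pd y)
    (m : ℕ) :
    (∑' x : {x : X // κ + 2 * D * m < Z x}, pd x.1) ≤
      ENNReal.ofReal ((D / (D + η)) ^ (m + 1)) :=
  stationary_geometric_tail_bound_general P hP Z hZ0 η κ D hη hD hC1 hC2 pd hpd1 hpd2 m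
end

section
/- One-step drift bound for ‖q‖² under MaxWeight (equation (11) in the proof of Proposition 4.2). Fix n ≥ 1, ν ∈ F with ν_min := min_{ij} ν_{ij} > 0, and 0 < ε < 1, with arrival means λ_{ij} = (1−ε)ν_{ij} and variances σ_{ij}². Fix a deterministic state q ∈ ℕ^{n×n}, let s(q) ∈ argmax_{s ∈ S*} ∑_{ij} q_{ij} s_{ij} be a MaxWeight schedule, let a be one arrival matrix, and let q⁺_{ij} = max(q_{ij} + a_{ij} − s_{ij}(q), 0). Then E[‖q⁺‖²] − ‖q‖² ≤ ‖λ‖² + ‖σ‖² + n − 2ε·⟨q, ν⟩ − 2ν_min·‖q_⊥‖, where the expectation is over the arrival matrix a, ‖λ‖² = ∑_{ij} λ_{ij}², ‖σ‖² = ∑_{ij} σ_{ij}², and q_⊥ is the residual of the projection of q (viewed in ℝ^{n×n}) onto the cone K. -/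
open scoped BigOperators ENNReal

/-!
Since `q⁺ᵢⱼ ≤ |qᵢⱼ + aᵢⱼ − sᵢⱼ|`, averaging over the independent arrivals gives
`E‖q⁺‖² ≤ ‖σ‖² + ‖q − s + λ‖²`, and as `s` is a permutation matrix and `λ ≥ 0` this is at most
`‖q‖² + ‖λ‖² + ‖σ‖² + n + 2⟨q, λ⟩ − 2⟨q, s⟩`. With `λ = (1 − ε)ν` it remains to show
`⟨q, ν⟩ + ν_min ‖q_⊥‖ ≤ ⟨q, s⟩`.

By Egerváry's theorem the MaxWeight value `⟨q, s⟩` dominates `∑ uᵢ + ∑ vⱼ` for an integer cover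
`qᵢⱼ ≤ uᵢ + vⱼ`: a cover of least value satisfies Hall's condition on its tight entries, since
otherwise it could be lowered, and a perfect matching of tight entries has weight equal to that
value. The matrix `xᵢⱼ = uᵢ + vⱼ` lies in `K`, hence `‖q_⊥‖ ≤ ‖x − q‖ ≤ ∑ (x − q)`, while
`⟨x, ν⟩ = ∑ uᵢ + ∑ vⱼ` because `ν` is doubly stochastic and `⟨x − q, ν⟩ ≥ ν_min ∑ (x − q)`.
-/

namespace SwitchModel

open Finset

variable {n : ℕ}

section ProductExpectation

variable {ι α R : Type*} [Fintype ι] [DecidableEq ι] [CommSemiring R]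

theorem sum_piFinset_prod_mul_sum (t : Finset α) (p g : ι → α → R)
    (hp : ∀ i, ∑ k ∈ t, p i k = 1) :
    ∑ a ∈ Fintype.piFinset (fun _ => t), (∏ i, p i (a i)) * ∑ i, g i (a i)
      = ∑ i, ∑ k ∈ t, p i k * g i k := by
  simp_rw [mul_sum]
  rw [sum_comm]
  refine sum_congr rfl fun i₀ _ => ?_
  have h := (prod_univ_sum (fun _ => t) fun i k => p i k * if i = i₀ then g i k else 1).symm
  simp only [prod_mul_distrib, prod_ite_eq', mem_univ, if_true] at h
  rw [h]
  simp_rw [mul_ite, mul_one]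
  rw [Fintype.prod_eq_single i₀ fun i hi => by simp [hi, hp]]
  simp

end ProductExpectation

theorem tsum_jointA_mul_sum {A : Fin n → Fin n → ℕ → ℝ≥0∞} (t : Finset ℕ)
    (hsupp : ∀ i j k, k ∉ t → A i j k = 0) (hone : ∀ i j, ∑ k ∈ t, A i j k = 1)
    (f : Fin n → Fin n → ℕ → ℝ≥0∞) :
    ∑' a, jointA n A a * ∑ i, ∑ j, f i j (a i j) = ∑ i, ∑ j, ∑ k ∈ t, A i j k * f i j k := by
  have hzero : ∀ a ∉ Fintype.piFinset fun _ => Fintype.piFinset fun _ => t,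
      jointA n A a * ∑ i, ∑ j, f i j (a i j) = 0 := by
    intro a ha
    simp only [Fintype.mem_piFinset, not_forall] at ha
    obtain ⟨i, j, hij⟩ := ha
    rw [jointA, prod_eq_zero (mem_univ i) (prod_eq_zero (mem_univ j) (hsupp i j _ hij)),
      zero_mul]
  rw [tsum_eq_sum hzero]
  refine (sum_piFinset_prod_mul_sum _ _ _ fun i => ?_).trans
    (sum_congr rfl fun i _ => sum_piFinset_prod_mul_sum _ _ _ (hone i))
  rw [sum_prod_piFinset, prod_eq_one fun j _ => hone i j]

theorem cast_tsub_sq_le {x s : ℕ} (hs : s ≤ 1) : ((x - s : ℕ) : ℝ) ^ 2 ≤ ((x : ℝ) - s) ^ 2 := by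
  rcases le_or_gt s x with h | h
  · rw [Nat.cast_sub h]
  · obtain ⟨rfl, rfl⟩ : x = 0 ∧ s = 1 := by omega
    norm_num

theorem sum_mul_add_sq_eq {κ : Type*} (t : Finset κ) (p x : κ → ℝ) {μ v : ℝ}
    (hp : ∑ k ∈ t, p k = 1) (hμ : ∑ k ∈ t, p k * x k = μ)
    (hv : ∑ k ∈ t, p k * (x k - μ) ^ 2 = v) (c : ℝ) :
    ∑ k ∈ t, p k * (c + x k) ^ 2 = v + (c + μ) ^ 2 := by
  have h : ∀ k, p k * (c + x k) ^ 2
      = p k * (x k - μ) ^ 2 + 2 * (c + μ) * (p k * x k) + ((c + μ) ^ 2 - 2 * (c + μ) * μ) * p k :=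
    fun k => by ring
  simp only [h, sum_add_distrib, ← mul_sum, hp, hμ, hv]
  ring

namespace ArrivalDist

variable {amax : ℕ} {A : Fin n → Fin n → ℕ → ℝ≥0∞} {lam sig : Fin n → Fin n → ℝ}

theorem eq_zero_of_notMem_range (hA : ArrivalDist n A lam sig amax) {i j : Fin n} {k : ℕ}
    (hk : k ∉ range (amax + 1)) : A i j k = 0 := by
  by_contra h
  exact hk (mem_range.2 (Nat.lt_succ_of_le (hA.2.1 i j k h)))

theorem sum_range_eq_one (hA : ArrivalDist n A lam sig amax) (i j : Fin n) :
    ∑ k ∈ range (amax + 1), A i j k = 1 := by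
  rw [← hA.1 i j, tsum_eq_sum fun k hk => hA.eq_zero_of_notMem_range hk]

theorem sum_range_toReal_mul {f : ℕ → ℝ} (hA : ArrivalDist n A lam sig amax) (i j : Fin n) :
    ∑ k ∈ range (amax + 1), (A i j k).toReal * f k = ∑' k, (A i j k).toReal * f k := by
  rw [tsum_eq_sum fun k hk => by rw [hA.eq_zero_of_notMem_range hk]; simp]

theorem sum_range_mul_ofReal_add_sq (hA : ArrivalDist n A lam sig amax) (i j : Fin n) (c : ℝ) :
    ∑ k ∈ range (amax + 1), A i j k * ENNReal.ofReal ((c + k) ^ 2)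
      = ENNReal.ofReal (sig i j ^ 2 + (c + lam i j) ^ 2) := by
  have hfin : ∀ k, A i j k ≠ ⊤ := fun k =>
    ne_top_of_le_ne_top ENNReal.one_ne_top (hA.1 i j ▸ ENNReal.le_tsum k)
  have hone : ∑ k ∈ range (amax + 1), (A i j k).toReal = 1 := by
    rw [← ENNReal.toReal_sum fun k _ => hfin k, hA.sum_range_eq_one, ENNReal.toReal_one]
  rw [← sum_mul_add_sq_eq _ _ _ hone ((hA.sum_range_toReal_mul i j).trans (hA.2.2.1 i j))
      ((hA.sum_range_toReal_mul i j).trans (hA.2.2.2 i j)) c,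
    ENNReal.ofReal_sum_of_nonneg fun k _ => by positivity]
  refine sum_congr rfl fun k _ => ?_
  rw [ENNReal.ofReal_mul ENNReal.toReal_nonneg, ENNReal.ofReal_toReal (hfin k)]

theorem tsum_jointA_mul_sum_sq_nextQ_le (hA : ArrivalDist n A lam sig amax)
    (q s : Fin n → Fin n → ℕ) (hs : ∀ i j, s i j ≤ 1) :
    ∑' a, jointA n A a * ∑ i, ∑ j, (nextQ n q a s i j : ℝ≥0∞) ^ 2
      ≤ ENNReal.ofReal (∑ i, ∑ j, (sig i j ^ 2 + ((q i j : ℝ) - s i j + lam i j) ^ 2)) := by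
  have hnext : ∀ a i j, (nextQ n q a s i j : ℝ≥0∞) ^ 2
      ≤ ENNReal.ofReal ((((q i j : ℝ) - s i j) + a i j) ^ 2) := fun a i j => by
    rw [← ENNReal.ofReal_natCast, ← ENNReal.ofReal_pow (Nat.cast_nonneg _)]
    refine ENNReal.ofReal_le_ofReal ((cast_tsub_sq_le (hs i j)).trans_eq ?_)
    push_cast
    ring
  calc ∑' a, jointA n A a * ∑ i, ∑ j, (nextQ n q a s i j : ℝ≥0∞) ^ 2
      ≤ ∑' a, jointA n A a * ∑ i, ∑ j, ENNReal.ofReal ((((q i j : ℝ) - s i j) + a i j) ^ 2) :=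
        ENNReal.tsum_le_tsum fun a =>
          mul_le_mul_right (sum_le_sum fun i _ => sum_le_sum fun j _ => hnext a i j) _
    _ = ∑ i, ∑ j, ∑ k ∈ range (amax + 1),
          A i j k * ENNReal.ofReal ((((q i j : ℝ) - s i j) + k) ^ 2) :=
        tsum_jointA_mul_sum (A := A) (range (amax + 1)) (fun _ _ _ => hA.eq_zero_of_notMem_range)
          hA.sum_range_eq_one fun i j k => ENNReal.ofReal ((((q i j : ℝ) - s i j) + k) ^ 2)
    _ = ∑ i, ∑ j, ENNReal.ofReal (sig i j ^ 2 + ((q i j : ℝ) - s i j + lam i j) ^ 2) := by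
        simp only [hA.sum_range_mul_ofReal_add_sq]
    _ = _ := by
        rw [ENNReal.ofReal_sum_of_nonneg fun i _ => sum_nonneg fun j _ => by positivity]
        exact sum_congr rfl fun i _ => (ENNReal.ofReal_sum_of_nonneg fun j _ => by positivity).symm

end ArrivalDist

section Egervary

variable {ι : Type*} [Fintype ι] [DecidableEq ι]

def IsCover (q : ι → ι → ℤ) (u v : ι → ℤ) : Prop :=
  ∀ i j, q i j ≤ u i + v j

def tightSet (q : ι → ι → ℤ) (u v : ι → ℤ) (i : ι) : Finset ι :=
  univ.filter fun j => u i + v j = q i j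

theorem exists_perm_sum_eq_of_forall_card_le {q : ι → ι → ℤ} {u v : ι → ℤ}
    (h : ∀ S : Finset ι, #S ≤ #(S.biUnion (tightSet q u v))) :
    ∃ π : Equiv.Perm ι, ∑ i, u i + ∑ j, v j = ∑ i, q i (π i) := by
  obtain ⟨f, hf, hft⟩ := (all_card_le_biUnion_card_iff_exists_injective _).1 h
  let π := Equiv.ofBijective f (Finite.injective_iff_bijective.1 hf)
  refine ⟨π, ?_⟩
  rw [← Equiv.sum_comp π v, ← sum_add_distrib]
  exact sum_congr rfl fun i _ => (mem_filter.1 (hft i)).2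

theorem IsCover.exists_sum_lt {q : ι → ι → ℤ} {u v : ι → ℤ} (h : IsCover q u v)
    {S : Finset ι} (hS : #(S.biUnion (tightSet q u v)) < #S) :
    ∃ u' v', IsCover q u' v' ∧ ∑ i, u' i + ∑ j, v' j < ∑ i, u i + ∑ j, v j := by
  set N := S.biUnion (tightSet q u v)
  -- Only the non-tight entries of the rows in `S` lose slack, so this is again a cover.
  refine ⟨fun i => u i - if i ∈ S then 1 else 0, fun j => v j + if j ∈ N then 1 else 0,
    fun i j => ?_, ?_⟩
  · have hij := h i j
    by_cases hi : i ∈ S <;> by_cases hj : j ∈ N <;> simp only [hi, hj, if_true, if_false]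
    · omega
    · have : u i + v j ≠ q i j := fun heq =>
        hj (mem_biUnion.2 ⟨i, hi, mem_filter.2 ⟨mem_univ j, heq⟩⟩)
      omega
    · omega
    · omega
  · simp only [sum_sub_distrib, sum_add_distrib, sum_boole, filter_mem_eq_inter, univ_inter]
    omega

theorem exists_isCover_sum_le (q : ι → ι → ℤ) (M : ℤ)
    (hM : ∀ π : Equiv.Perm ι, ∑ i, q i (π i) ≤ M) :
    ∃ u v, IsCover q u v ∧ ∑ i, u i + ∑ j, v j ≤ M := by
  obtain ⟨c, ⟨u, v, hcov, rfl⟩, hmin⟩ :=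
    Int.exists_least_of_bdd (P := fun c => ∃ u v, IsCover q u v ∧ ∑ i, u i + ∑ j, v j = c)
      ⟨∑ i, q i i, fun c ⟨u, v, h, hc⟩ => by
        rw [← hc, ← sum_add_distrib]
        exact sum_le_sum fun i _ => h i i⟩
      ⟨_, fun i => ∑ j, |q i j|, 0, fun i j => by
        simpa using (le_abs_self _).trans
          (single_le_sum (f := fun j => |q i j|) (fun _ _ => abs_nonneg _) (mem_univ j)), rfl⟩
  by_cases hall : ∀ S : Finset ι, #S ≤ #(S.biUnion (tightSet q u v))
  · obtain ⟨π, hπ⟩ := exists_perm_sum_eq_of_forall_card_le hall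
    exact ⟨u, v, hcov, hπ ▸ hM π⟩
  · push Not at hall
    obtain ⟨S, hS⟩ := hall
    obtain ⟨u', v', hcov', hlt⟩ := hcov.exists_sum_lt hS
    exact absurd (hmin _ ⟨u', v', hcov', rfl⟩) (not_le.2 hlt)

end Egervary

theorem normE_le_sum_sum_abs (x : Fin n → Fin n → ℝ) : normE n x ≤ ∑ i, ∑ j, |x i j| := by
  set D := ∑ i, ∑ j, |x i j|
  have hD : ∀ i j, |x i j| ≤ D := fun i j =>
    (single_le_sum (f := fun j => |x i j|) (fun _ _ => abs_nonneg _) (mem_univ j)).trans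
      (single_le_sum (f := fun i => ∑ j, |x i j|)
        (fun _ _ => sum_nonneg fun _ _ => abs_nonneg _) (mem_univ i))
  refine (Real.sqrt_le_left (by positivity)).2 ?_
  calc ∑ i, ∑ j, x i j ^ 2 = ∑ i, ∑ j, |x i j| * |x i j| := by simp only [abs_mul_abs_self, sq]
    _ ≤ ∑ i, ∑ j, |x i j| * D :=
        sum_le_sum fun i _ => sum_le_sum fun j _ => mul_le_mul_of_nonneg_left (hD i j) (abs_nonneg _)
    _ = D ^ 2 := by simp only [sq, ← sum_mul]; rfl

theorem add_mem_coneK {u v : Fin n → ℝ} (h : ∀ i j, 0 ≤ u i + v j) :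
    (fun i j => u i + v j) ∈ coneK n := by
  rcases isEmpty_or_nonempty (Fin n) with hn | hn
  · exact ⟨u, v, isEmptyElim, isEmptyElim, fun _ _ => rfl⟩
  obtain ⟨j₀, hj₀⟩ := Finite.exists_min v
  exact ⟨fun i => u i + v j₀, fun j => v j - v j₀, fun i => h i j₀, fun j => sub_nonneg.2 (hj₀ j),
    fun i j => by ring⟩

theorem sum_sum_add_mul_eq {ν : Fin n → Fin n → ℝ} (hν : memF n ν) (u v : Fin n → ℝ) :
    ∑ i, ∑ j, (u i + v j) * ν i j = ∑ i, u i + ∑ j, v j := by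
  simp only [add_mul, sum_add_distrib, ← mul_sum, hν.2.1, mul_one]
  rw [sum_comm]
  simp only [← mul_sum, hν.2.2, mul_one]

theorem sum_sum_mul_add_mul_normE_le {ν : Fin n → Fin n → ℝ} {νmin : ℝ}
    (hlb : ∀ i j, νmin ≤ ν i j) (h0 : 0 ≤ νmin) {x y z : Fin n → Fin n → ℝ}
    (hxy : ∀ i j, x i j ≤ y i j) (hz : normE n (x - z) ≤ normE n (x - y)) :
    ∑ i, ∑ j, x i j * ν i j + νmin * normE n (x - z) ≤ ∑ i, ∑ j, y i j * ν i j := by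
  have hdist : normE n (x - z) ≤ ∑ i, ∑ j, (y i j - x i j) := by
    refine hz.trans ((normE_le_sum_sum_abs _).trans_eq ?_)
    simp only [Pi.sub_apply, abs_sub_comm (x _ _), abs_of_nonneg (sub_nonneg.2 (hxy _ _))]
  have hgap : νmin * normE n (x - z) ≤ ∑ i, ∑ j, (y i j - x i j) * ν i j :=
    calc νmin * normE n (x - z) ≤ ∑ i, ∑ j, νmin * (y i j - x i j) := by
          simpa only [mul_sum] using mul_le_mul_of_nonneg_left hdist h0
      _ ≤ _ := sum_le_sum fun i _ => sum_le_sum fun j _ => by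
          rw [mul_comm]
          exact mul_le_mul_of_nonneg_left (hlb i j) (sub_nonneg.2 (hxy i j))
  simp only [sub_mul, sum_sub_distrib] at hgap
  linarith

theorem isPerm_ite_apply_eq (π : Equiv.Perm (Fin n)) :
    IsPerm n fun i j => if π i = j then 1 else 0 :=
  ⟨fun i j => by dsimp only; split_ifs <;> simp, fun i => by simp,
    fun j => by simp [← Equiv.eq_symm_apply]⟩

theorem sum_sum_mul_add_mul_normE_le_of_maxWeight {ν : Fin n → Fin n → ℝ} (hν : memF n ν)
    {νmin : ℝ} (hlb : ∀ i j, νmin ≤ ν i j) (h0 : 0 ≤ νmin) {q s : Fin n → Fin n → ℕ}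
    (hs : ∀ s', IsPerm n s' → ∑ i, ∑ j, q i j * s' i j ≤ ∑ i, ∑ j, q i j * s i j)
    {qpar : Fin n → Fin n → ℝ}
    (hpar : ∀ y ∈ coneK n, normE n (toR n q - qpar) ≤ normE n (toR n q - y)) :
    ∑ i, ∑ j, (q i j : ℝ) * ν i j + νmin * normE n (toR n q - qpar)
      ≤ ∑ i, ∑ j, (q i j : ℝ) * s i j := by
  obtain ⟨u, v, hcov, hsum⟩ := exists_isCover_sum_le (fun i j => (q i j : ℤ))
    (∑ i, ∑ j, q i j * s i j : ℕ) fun π => by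
      have := hs _ (isPerm_ite_apply_eq π)
      simp only [mul_ite, mul_one, mul_zero, sum_ite_eq, mem_univ, if_true] at this
      exact_mod_cast this
  have hqx : ∀ i j, toR n q i j ≤ (u i : ℝ) + v j := fun i j => by
    simpa only [toR, ← Int.cast_natCast (R := ℝ), ← Int.cast_add, Int.cast_le] using hcov i j
  have hxK := add_mem_coneK fun i j => (Nat.cast_nonneg (q i j)).trans (hqx i j)
  calc _ ≤ ∑ i, ∑ j, ((u i : ℝ) + v j) * ν i j :=
        sum_sum_mul_add_mul_normE_le hlb h0 hqx (hpar _ hxK)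
    _ = ∑ i, (u i : ℝ) + ∑ j, (v j : ℝ) := sum_sum_add_mul_eq hν _ _
    _ ≤ _ := by exact_mod_cast hsum

theorem sum_sum_sq_sub_add_le {s : Fin n → Fin n → ℕ} (hs : IsPerm n s) (q : Fin n → Fin n → ℕ)
    {lam : Fin n → Fin n → ℝ} (hlam : ∀ i j, 0 ≤ lam i j) (sig : Fin n → Fin n → ℝ) :
    ∑ i, ∑ j, (sig i j ^ 2 + ((q i j : ℝ) - s i j + lam i j) ^ 2)
      ≤ ∑ i, ∑ j, (q i j : ℝ) ^ 2 + ∑ i, ∑ j, lam i j ^ 2 + ∑ i, ∑ j, sig i j ^ 2 + n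
        + 2 * ∑ i, ∑ j, (q i j : ℝ) * lam i j - 2 * ∑ i, ∑ j, (q i j : ℝ) * s i j := by
  have hterm : ∀ i j, sig i j ^ 2 + ((q i j : ℝ) - s i j + lam i j) ^ 2
      ≤ (q i j : ℝ) ^ 2 + lam i j ^ 2 + sig i j ^ 2 + s i j
        + 2 * ((q i j : ℝ) * lam i j) - 2 * ((q i j : ℝ) * s i j) := fun i j => by
    obtain h | h : s i j = 0 ∨ s i j = 1 := by have := hs.1 i j; omega
    all_goals rw [h]; push_cast; nlinarith [hlam i j]
  have hsum : ∑ i, ∑ j, (s i j : ℝ) = n := by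
    simp only [← Nat.cast_sum, hs.2.1]
    simp
  calc _ ≤ _ := sum_le_sum fun i _ => sum_le_sum fun j _ => hterm i j
    _ = _ := by simp only [sum_add_distrib, sum_sub_distrib, ← mul_sum, hsum]

end SwitchModel

open SwitchModel

theorem drift_V_bound_general
    (n : ℕ)
    (ν : Fin n → Fin n → ℝ) (hν : memF n ν)
    (νmin : ℝ) (hνmin : IsLeast {x : ℝ | ∃ i j : Fin n, ν i j = x} νmin)
    (hνminpos : 0 < νmin)
    (ε : ℝ) (hε0 : 0 < ε) (hε1 : ε < 1)
    (sig : Fin n → Fin n → ℝ) (amax : ℕ)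
    (A : Fin n → Fin n → ℕ → ℝ≥0∞)
    (hA : ArrivalDist n A (fun i j => (1 - ε) * ν i j) sig amax)
    (q : Fin n → Fin n → ℕ) (s : Fin n → Fin n → ℕ)
    (hs : IsPerm n s ∧ ∀ s', IsPerm n s' →
      (∑ i, ∑ j, q i j * s' i j) ≤ (∑ i, ∑ j, q i j * s i j))
    (qpar : Fin n → Fin n → ℝ)
    (hpar : qpar ∈ coneK n ∧ ∀ y ∈ coneK n, normE n (toR n q - qpar) ≤ normE n (toR n q - y)) :
    (∑' a : Fin n → Fin n → ℕ,
        jointA n A a * (∑ i, ∑ j, ((nextQ n q a s i j : ℝ≥0∞)) ^ 2))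
      + ENNReal.ofReal (2 * ε * (∑ i, ∑ j, (q i j : ℝ) * ν i j)
          + 2 * νmin * normE n (toR n q - qpar))
    ≤ ENNReal.ofReal ((∑ i, ∑ j, ((q i j : ℝ)) ^ 2)
        + (∑ i, ∑ j, ((1 - ε) * ν i j) ^ 2) + (∑ i, ∑ j, (sig i j) ^ 2) + n) := by
  have hlam : ∀ i j, 0 ≤ (1 - ε) * ν i j := fun i j => mul_nonneg (by linarith) (hν.1 i j)
  have hdrift := sum_sum_sq_sub_add_le hs.1 q hlam sig
  have hkey := sum_sum_mul_add_mul_normE_le_of_maxWeight hν (fun i j => hνmin.2 ⟨i, j, rfl⟩)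
    hνminpos.le hs.2 hpar.2
  have hqν : 0 ≤ ∑ i, ∑ j, (q i j : ℝ) * ν i j :=
    Finset.sum_nonneg fun i _ => Finset.sum_nonneg fun j _ => mul_nonneg (by positivity) (hν.1 i j)
  have hqlam : ∑ i, ∑ j, (q i j : ℝ) * ((1 - ε) * ν i j)
      = (1 - ε) * ∑ i, ∑ j, (q i j : ℝ) * ν i j := by
    simp only [Finset.mul_sum, mul_left_comm]
  rw [hqlam] at hdrift
  calc _ ≤ ENNReal.ofReal (∑ i, ∑ j, (sig i j ^ 2 + ((q i j : ℝ) - s i j + (1 - ε) * ν i j) ^ 2))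
        + ENNReal.ofReal (2 * ε * (∑ i, ∑ j, (q i j : ℝ) * ν i j)
          + 2 * νmin * normE n (toR n q - qpar)) :=
        add_le_add_left (hA.tsum_jointA_mul_sum_sq_nextQ_le q s hs.1.1) _
    _ = ENNReal.ofReal (∑ i, ∑ j, (sig i j ^ 2 + ((q i j : ℝ) - s i j + (1 - ε) * ν i j) ^ 2)
        + (2 * ε * (∑ i, ∑ j, (q i j : ℝ) * ν i j) + 2 * νmin * normE n (toR n q - qpar))) :=
        (ENNReal.ofReal_add (by positivity) (add_nonneg (mul_nonneg (by positivity) hqν)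
          (mul_nonneg (by positivity) (Real.sqrt_nonneg _)))).symm
    _ ≤ _ := ENNReal.ofReal_le_ofReal (by linarith)

/-- equation (11) in the proof of Proposition 4.2: one-step drift bound
for `‖q‖²` under a MaxWeight schedule.  The inequality
`E[‖q⁺‖²] − ‖q‖² ≤ ‖λ‖² + ‖σ‖² + n − 2ε⟨q,ν⟩ − 2ν_min‖q_⊥‖`
is stated in `ℝ≥0∞` with the (nonnegative) negative terms moved to the left side. -/
theorem drift_V_bound
    (n : ℕ) (hn : 1 ≤ n)
    (ν : Fin n → Fin n → ℝ) (hν : memF n ν)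
    (νmin : ℝ) (hνmin : IsLeast {x : ℝ | ∃ i j : Fin n, ν i j = x} νmin)
    (hνminpos : 0 < νmin)
    (ε : ℝ) (hε0 : 0 < ε) (hε1 : ε < 1)
    (sig : Fin n → Fin n → ℝ) (amax : ℕ) (hamax : 1 ≤ amax)
    (A : Fin n → Fin n → ℕ → ℝ≥0∞)
    (hA : ArrivalDist n A (fun i j => (1 - ε) * ν i j) sig amax)
    (q : Fin n → Fin n → ℕ) (s : Fin n → Fin n → ℕ)
    (hs : IsPerm n s ∧ ∀ s', IsPerm n s' →
      (∑ i, ∑ j, q i j * s' i j) ≤ (∑ i, ∑ j, q i j * s i j))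
    (qpar : Fin n → Fin n → ℝ)
    (hpar : qpar ∈ coneK n ∧ ∀ y ∈ coneK n, normE n (toR n q - qpar) ≤ normE n (toR n q - y)) :
    (∑' a : Fin n → Fin n → ℕ,
        jointA n A a * (∑ i, ∑ j, ((nextQ n q a s i j : ℝ≥0∞)) ^ 2))
      + ENNReal.ofReal (2 * ε * (∑ i, ∑ j, (q i j : ℝ) * ν i j)
          + 2 * νmin * normE n (toR n q - qpar))
    ≤ ENNReal.ofReal ((∑ i, ∑ j, ((q i j : ℝ)) ^ 2)
        + (∑ i, ∑ j, ((1 - ε) * ν i j) ^ 2) + (∑ i, ∑ j, (sig i j) ^ 2) + n) :=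
  drift_V_bound_general n ν hν νmin hνmin hνminpos ε hε0 hε1 sig amax A hA q s hs qpar hpar
end

section
/- One-step drift bound for ‖q_∥‖² under MaxWeight (equation (12) in the proof of Proposition 4.2). Fix n ≥ 1, ν ∈ F, and 0 < ε < 1, with arrival means λ_{ij} = (1−ε)ν_{ij}. Fix a deterministic state q ∈ ℕ^{n×n}, let s(q) ∈ argmax_{s ∈ S*} ∑_{ij} q_{ij} s_{ij} be a MaxWeight schedule, let a be one arrival matrix, and let q⁺_{ij} = max(q_{ij} + a_{ij} − s_{ij}(q), 0). Then E[‖q⁺_∥‖²] − ‖q_∥‖² ≥ −2ε·⟨q_∥, ν⟩, where the expectation is over the arrival matrix a and q_∥, q⁺_∥ are the projections of q and q⁺ (viewed in ℝ^{n×n}) onto the cone K. -/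
open scoped BigOperators ENNReal

open SwitchModel

namespace DriftAux
open SwitchModel


variable {n : ℕ}

/-- inner product on matrices -/
def ip (n : ℕ) (x y : Fin n → Fin n → ℝ) : ℝ := ∑ i, ∑ j, x i j * y i j

lemma ip_comm (x y : Fin n → Fin n → ℝ) : ip n x y = ip n y x := by
  unfold ip; congr 1; ext i; congr 1; ext j; ring

lemma ip_sub_left (x y z : Fin n → Fin n → ℝ) : ip n (x - y) z = ip n x z - ip n y z := by
  simp [ip, sub_mul, Finset.sum_sub_distrib]

lemma ip_add_left (x y z : Fin n → Fin n → ℝ) : ip n (x + y) z = ip n x z + ip n y z := by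
  simp [ip, add_mul, Finset.sum_add_distrib]

lemma ip_smul_left (t : ℝ) (x y : Fin n → Fin n → ℝ) : ip n (t • x) y = t * ip n x y := by
  simp [ip, Finset.mul_sum, mul_assoc]

lemma ip_smul_right (t : ℝ) (x y : Fin n → Fin n → ℝ) : ip n x (t • y) = t * ip n x y := by
  rw [ip_comm, ip_smul_left, ip_comm y x]

lemma ip_sub_right (x y z : Fin n → Fin n → ℝ) : ip n x (y - z) = ip n x y - ip n x z := by
  rw [ip_comm, ip_sub_left, ip_comm z x, ip_comm y x]

lemma ip_self_nonneg (x : Fin n → Fin n → ℝ) : 0 ≤ ip n x x := by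
  apply Finset.sum_nonneg; intro i _; apply Finset.sum_nonneg; intro j _; exact mul_self_nonneg _

lemma normE_eq (x : Fin n → Fin n → ℝ) : SwitchModel.normE n x = Real.sqrt (ip n x x) := by
  unfold SwitchModel.normE ip; congr 1; refine Finset.sum_congr rfl fun i _ => ?_
  refine Finset.sum_congr rfl fun j _ => ?_; ring

lemma expand_sub (d z : Fin n → Fin n → ℝ) (t : ℝ) :
    ip n (d - t • z) (d - t • z) = ip n d d - 2 * t * ip n d z + t ^ 2 * ip n z z := by
  rw [ip_sub_left, ip_sub_right, ip_sub_right, ip_smul_left, ip_comm d (t • z), ip_smul_left,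
    ip_smul_left, ip_smul_right, ip_comm z d]
  ring

lemma coneK_convex_pt {x y : Fin n → Fin n → ℝ} (hx : x ∈ SwitchModel.coneK n)
    (hy : y ∈ SwitchModel.coneK n) {t : ℝ} (ht0 : 0 ≤ t) (ht1 : t ≤ 1) :
    x + t • (y - x) ∈ SwitchModel.coneK n := by
  obtain ⟨w, wt, hw, hwt, hrep⟩ := hx
  obtain ⟨v, vt, hv, hvt, hrep'⟩ := hy
  refine ⟨fun i => (1 - t) * w i + t * v i, fun j => (1 - t) * wt j + t * vt j, ?_, ?_, ?_⟩
  · intro i; exact add_nonneg (mul_nonneg (by linarith) (hw i)) (mul_nonneg ht0 (hv i))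
  · intro j; exact add_nonneg (mul_nonneg (by linarith) (hwt j)) (mul_nonneg ht0 (hvt j))
  · intro i j
    have : (x + t • (y - x)) i j = x i j + t * (y i j - x i j) := by
      simp [Pi.add_apply, Pi.smul_apply]
    rw [this, hrep i j, hrep' i j]; ring


lemma variational {proj : (Fin n → Fin n → ℝ) → (Fin n → Fin n → ℝ)}
    (hproj : IsConeProj n proj) (x y : Fin n → Fin n → ℝ) (hy : y ∈ coneK n) :
    ip n (x - proj x) (y - proj x) ≤ 0 := by
  set p := proj x with hp
  set d := x - p with hd
  set z := y - p with hz
  by_contra hcon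
  push_neg at hcon
  set c := ip n d z with hc
  have key : ∀ t : ℝ, 0 < t → t ≤ 1 → 2 * t * c ≤ t ^ 2 * ip n z z := by
    intro t ht0 ht1
    have hmem : p + t • z ∈ coneK n := coneK_convex_pt (hproj x).1 hy (le_of_lt ht0) ht1
    have hle := (hproj x).2 _ hmem
    rw [normE_eq, normE_eq] at hle
    have hxe : x - (p + t • z) = d - t • z := by rw [hd]; abel
    rw [hxe] at hle
    have h1 : ip n d d ≤ ip n (d - t • z) (d - t • z) := by
      have hbn := ip_self_nonneg (n := n) (d - t • z)
      have han := ip_self_nonneg (n := n) d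
      nlinarith [Real.sq_sqrt hbn, Real.sq_sqrt han, Real.sqrt_nonneg (ip n d d),
        Real.sqrt_nonneg (ip n (d - t • z) (d - t • z))]
    rw [expand_sub] at h1
    linarith
  have hN := ip_self_nonneg (n := n) z
  set N := ip n z z with hNdef
  set t := min 1 (c / (N + 1)) with htdef
  have ht0 : 0 < t := lt_min one_pos (div_pos hcon (by linarith))
  have ht1 : t ≤ 1 := min_le_left _ _
  have htc : t ≤ c / (N + 1) := min_le_right _ _
  have h2 := key t ht0 ht1
  have htN : t * N ≤ c * N / (N + 1) := by
    rw [div_eq_mul_inv, mul_comm c N, mul_assoc]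
    calc t * N ≤ (c / (N + 1)) * N := by nlinarith
    _ = N * (c * (N + 1)⁻¹) := by ring
  have hlt : c * N / (N + 1) < c := by
    rw [div_lt_iff₀ (by linarith)]
    nlinarith
  nlinarith

lemma ip_perp_self {proj : (Fin n → Fin n → ℝ) → (Fin n → Fin n → ℝ)}
    (hproj : IsConeProj n proj) (x : Fin n → Fin n → ℝ) :
    ip n (x - proj x) (proj x) = 0 := by
  have h0 : (fun _ _ => (0:ℝ)) ∈ coneK n :=
    ⟨fun _ => 0, fun _ => 0, fun _ => le_refl 0, fun _ => le_refl 0, fun _ _ => by simp⟩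
  have h2 : (2:ℝ) • proj x ∈ coneK n := by
    obtain ⟨w, wt, hw, hwt, hrep⟩ := (hproj x).1
    refine ⟨fun i => 2 * w i, fun j => 2 * wt j, fun i => by simp; linarith [hw i],
      fun j => by simp; linarith [hwt j], fun i j => ?_⟩
    have : ((2:ℝ) • proj x) i j = 2 * proj x i j := by simp
    rw [this, hrep i j]; ring
  have hA := variational hproj x _ h0
  have hB := variational hproj x _ h2
  rw [ip_sub_right] at hA hB
  have e1 : ip n (x - proj x) (fun _ _ => (0:ℝ)) = 0 := by simp [ip]
  have e2 : ip n (x - proj x) ((2:ℝ) • proj x) = 2 * ip n (x - proj x) (proj x) := ip_smul_right _ _ _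
  rw [e1] at hA; rw [e2] at hB
  linarith

lemma ip_perp_mem {proj : (Fin n → Fin n → ℝ) → (Fin n → Fin n → ℝ)}
    (hproj : IsConeProj n proj) (x y : Fin n → Fin n → ℝ) (hy : y ∈ coneK n) :
    ip n (x - proj x) y ≤ 0 := by
  have h := variational hproj x y hy
  rw [ip_sub_right] at h
  have h2 := ip_perp_self hproj x
  linarith

lemma ip_proj_self {proj : (Fin n → Fin n → ℝ) → (Fin n → Fin n → ℝ)}
    (hproj : IsConeProj n proj) (x : Fin n → Fin n → ℝ) :
    ip n x (proj x) = ip n (proj x) (proj x) := by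
  have h := ip_perp_self hproj x
  rw [ip_sub_left] at h
  linarith

lemma coneK_nonneg {y : Fin n → Fin n → ℝ} (hy : y ∈ coneK n) (i j : Fin n) : 0 ≤ y i j := by
  obtain ⟨w, wt, hw, hwt, hrep⟩ := hy
  rw [hrep i j]; exact add_nonneg (hw i) (hwt j)

/-- pairing of a doubly stochastic matrix with an element of the cone. -/
lemma ip_doubly (w wt : Fin n → ℝ) (m : Fin n → Fin n → ℝ)
    (hrow : ∀ i, (∑ j, m i j) = 1) (hcol : ∀ j, (∑ i, m i j) = 1) :
    (∑ i, ∑ j, m i j * (w i + wt j)) = (∑ i, w i) + (∑ j, wt j) := by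
  have : (∑ i, ∑ j, m i j * (w i + wt j))
      = (∑ i, ∑ j, m i j * w i) + (∑ i, ∑ j, m i j * wt j) := by
    rw [← Finset.sum_add_distrib]
    refine Finset.sum_congr rfl fun i _ => ?_
    rw [← Finset.sum_add_distrib]
    refine Finset.sum_congr rfl fun j _ => ?_; ring
  rw [this]
  congr 1
  · refine Finset.sum_congr rfl fun i _ => ?_
    rw [← Finset.sum_mul, hrow i, one_mul]
  · rw [Finset.sum_comm]
    refine Finset.sum_congr rfl fun j _ => ?_
    rw [← Finset.sum_mul, hcol j, one_mul]


section Prob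
open SwitchModel Finset

variable {n : ℕ} (A : Fin n → Fin n → ℕ → ℝ≥0∞) (amax : ℕ)

/-- support set of the joint arrival distribution -/
def T (n amax : ℕ) : Finset (Fin n → Fin n → ℕ) :=
  Fintype.piFinset fun _ => Fintype.piFinset fun _ => Finset.range (amax + 1)

lemma mem_T {a : Fin n → Fin n → ℕ} : a ∈ T n amax ↔ ∀ i j, a i j ≤ amax := by
  simp [T, Fintype.mem_piFinset, Nat.lt_succ_iff]

lemma jointA_zero (hbound : ∀ i j k, A i j k ≠ 0 → k ≤ amax)
    {a : Fin n → Fin n → ℕ} (ha : a ∉ T n amax) : jointA n A a = 0 := by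
  rw [mem_T] at ha
  push_neg at ha
  obtain ⟨i, j, hij⟩ := ha
  have hz : A i j (a i j) = 0 := by
    by_contra hne
    exact absurd (hbound i j _ hne) (by omega)
  unfold jointA
  refine Finset.prod_eq_zero (Finset.mem_univ i) ?_
  exact Finset.prod_eq_zero (Finset.mem_univ j) hz

lemma marg_fin (hbound : ∀ i j k, A i j k ≠ 0 → k ≤ amax)
    (hsum : ∀ i j, (∑' k : ℕ, A i j k) = 1) (i j : Fin n) :
    (∑ k ∈ Finset.range (amax + 1), A i j k) = 1 := by
  rw [← hsum i j]
  refine (tsum_eq_sum ?_).symm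
  intro k hk
  by_contra hne
  exact absurd (hbound i j k hne) (by simp [Finset.mem_range] at hk; omega)

lemma prod_prod_ite (c : Fin n → Fin n → ℝ≥0∞) (i₀ j₀ : Fin n) :
    (∏ i, ∏ j, (if i = i₀ then (if j = j₀ then c i j else 1) else 1)) = c i₀ j₀ := by
  have inner : ∀ i, (∏ j, (if i = i₀ then (if j = j₀ then c i j else 1) else 1))
      = if i = i₀ then c i j₀ else 1 := by
    intro i
    by_cases hi : i = i₀
    · subst hi
      simp [Finset.prod_ite_eq' Finset.univ j₀ (fun j => c i j)]
    · simp [hi]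
  rw [Finset.prod_congr rfl fun i _ => inner i,
    Finset.prod_ite_eq' Finset.univ i₀ (fun i => c i j₀)]
  simp

lemma sum_T_prod (g : Fin n → Fin n → ℕ → ℝ≥0∞) :
    (∑ a ∈ T n amax, ∏ i, ∏ j, g i j (a i j))
      = ∏ i, ∏ j, ∑ k ∈ Finset.range (amax + 1), g i j k := by
  unfold T
  rw [← Finset.prod_univ_sum
    (fun _ : Fin n => Fintype.piFinset fun _ : Fin n => Finset.range (amax + 1))
    (fun i b => ∏ j, g i j (b j))]
  exact Finset.prod_congr rfl fun i _ => (Finset.prod_univ_sum _ _).symm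

lemma mass_T (hbound : ∀ i j k, A i j k ≠ 0 → k ≤ amax)
    (hsum : ∀ i j, (∑' k : ℕ, A i j k) = 1) :
    (∑ a ∈ T n amax, jointA n A a) = 1 := by
  unfold jointA
  rw [sum_T_prod amax]
  simp [marg_fin A amax hbound hsum]

lemma tsum_eq_T {g : (Fin n → Fin n → ℕ) → ℝ≥0∞}
    (hbound : ∀ i j k, A i j k ≠ 0 → k ≤ amax) :
    (∑' a : Fin n → Fin n → ℕ, jointA n A a * g a) = ∑ a ∈ T n amax, jointA n A a * g a := by
  refine tsum_eq_sum fun a ha => ?_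
  rw [jointA_zero A amax hbound ha, zero_mul]

lemma mass (hbound : ∀ i j k, A i j k ≠ 0 → k ≤ amax)
    (hsum : ∀ i j, (∑' k : ℕ, A i j k) = 1) :
    (∑' a : Fin n → Fin n → ℕ, jointA n A a) = 1 := by
  have h : (∑' a : Fin n → Fin n → ℕ, jointA n A a)
      = ∑' a : Fin n → Fin n → ℕ, jointA n A a * 1 := by simp
  rw [h, tsum_eq_T A amax hbound]
  simp only [mul_one]
  exact mass_T A amax hbound hsum

lemma mean_entry (lam : Fin n → Fin n → ℝ)
    (hbound : ∀ i j k, A i j k ≠ 0 → k ≤ amax)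
    (hsum : ∀ i j, (∑' k : ℕ, A i j k) = 1)
    (hmean : ∀ i j, (∑ k ∈ Finset.range (amax + 1), A i j k * (k : ℝ≥0∞))
      = ENNReal.ofReal (lam i j)) (i₀ j₀ : Fin n) :
    (∑ a ∈ T n amax, jointA n A a * ((a i₀ j₀ : ℕ) : ℝ≥0∞)) = ENNReal.ofReal (lam i₀ j₀) := by
  have hpt : ∀ a : Fin n → Fin n → ℕ, jointA n A a * ((a i₀ j₀ : ℕ) : ℝ≥0∞)
      = ∏ i, ∏ j, (A i j (a i j) *
          (if i = i₀ then (if j = j₀ then ((a i j : ℕ) : ℝ≥0∞) else 1) else 1)) := by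
    intro a
    rw [show (∏ i, ∏ j, (A i j (a i j) *
          (if i = i₀ then (if j = j₀ then ((a i j : ℕ) : ℝ≥0∞) else 1) else 1)))
        = (∏ i, ∏ j, A i j (a i j)) *
          ∏ i, ∏ j, (if i = i₀ then (if j = j₀ then ((a i j : ℕ) : ℝ≥0∞) else 1) else 1) by
      rw [← Finset.prod_mul_distrib]
      exact Finset.prod_congr rfl fun i _ => Finset.prod_mul_distrib]
    rw [prod_prod_ite (fun i j => ((a i j : ℕ) : ℝ≥0∞)) i₀ j₀]
    rfl
  rw [Finset.sum_congr rfl fun a _ => hpt a]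
  rw [sum_T_prod amax (fun i j k =>
    A i j k * (if i = i₀ then (if j = j₀ then ((k : ℕ) : ℝ≥0∞) else 1) else 1))]
  have factor : ∀ i j : Fin n, (∑ k ∈ Finset.range (amax + 1),
      (A i j k * (if i = i₀ then (if j = j₀ then ((k : ℕ) : ℝ≥0∞) else 1) else 1)))
      = if i = i₀ then (if j = j₀ then ENNReal.ofReal (lam i j) else 1) else 1 := by
    intro i j
    by_cases hi : i = i₀
    · subst hi
      by_cases hj : j = j₀
      · subst hj; simp [hmean]
      · simp [hj, marg_fin A amax hbound hsum]
    · simp [hi, marg_fin A amax hbound hsum]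
  rw [Finset.prod_congr rfl fun i _ => Finset.prod_congr rfl fun j _ => factor i j]
  exact prod_prod_ite (fun i j => ENNReal.ofReal (lam i j)) i₀ j₀

end Prob

lemma det_key {n : ℕ} (q a s : Fin n → Fin n → ℕ)
    {proj : (Fin n → Fin n → ℝ) → (Fin n → Fin n → ℝ)} (hproj : IsConeProj n proj) :
    (∑ i, ∑ j, proj (toR n q) i j ^ 2) + 2 * (∑ i, ∑ j, (a i j : ℝ) * proj (toR n q) i j)
      ≤ (∑ i, ∑ j, proj (toR n (nextQ n q a s)) i j ^ 2)
        + 2 * (∑ i, ∑ j, (s i j : ℝ) * proj (toR n q) i j) := by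
  set p := proj (toR n q) with hp
  set x2 := toR n (nextQ n q a s) with hx2
  set pp := proj x2 with hpp
  have hK : p ∈ coneK n := (hproj (toR n q)).1
  have h1 : 0 ≤ ip n (pp - p) (pp - p) := ip_self_nonneg _
  have hexp : ip n (pp - p) (pp - p) = ip n pp pp - 2 * ip n pp p + ip n p p := by
    have h := expand_sub (n := n) pp p 1
    simpa using h
  have h2 : ip n (x2 - pp) p ≤ 0 := ip_perp_mem hproj x2 p hK
  rw [ip_sub_left] at h2
  have hentry : ∀ i j : Fin n, (q i j : ℝ) * p i j + (a i j : ℝ) * p i j - (s i j : ℝ) * p i j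
      ≤ x2 i j * p i j := by
    intro i j
    have hpn := coneK_nonneg hK i j
    have hx : (q i j : ℝ) + (a i j : ℝ) - (s i j : ℝ) ≤ x2 i j := by
      show _ ≤ ((q i j + a i j - s i j : ℕ) : ℝ)
      rcases le_or_gt (s i j) (q i j + a i j) with h | h
      · rw [Nat.cast_sub h, Nat.cast_add]
      · have h0 : q i j + a i j - s i j = 0 := Nat.sub_eq_zero_of_le h.le
        rw [h0]
        have hlt : ((q i j + a i j : ℕ) : ℝ) < (s i j : ℝ) := by exact_mod_cast h
        push_cast at hlt ⊢
        linarith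
    nlinarith [mul_le_mul_of_nonneg_right hx hpn]
  have h3 : ip n (toR n q) p + (∑ i, ∑ j, (a i j : ℝ) * p i j)
      - (∑ i, ∑ j, (s i j : ℝ) * p i j) ≤ ip n x2 p := by
    have heq : ip n (toR n q) p + (∑ i, ∑ j, (a i j : ℝ) * p i j)
        - (∑ i, ∑ j, (s i j : ℝ) * p i j)
        = ∑ i, ∑ j, ((q i j : ℝ) * p i j + (a i j : ℝ) * p i j - (s i j : ℝ) * p i j) := by
      simp [ip, toR, Finset.sum_add_distrib, Finset.sum_sub_distrib]
    rw [heq]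
    exact Finset.sum_le_sum fun i _ => Finset.sum_le_sum fun j _ => hentry i j
  have h4 : ip n (toR n q) p = ip n p p := ip_proj_self hproj _
  have e1 : (∑ i, ∑ j, p i j ^ 2) = ip n p p := by
    unfold ip; exact Finset.sum_congr rfl fun i _ => Finset.sum_congr rfl fun j _ => by ring
  have e2 : (∑ i, ∑ j, pp i j ^ 2) = ip n pp pp := by
    unfold ip; exact Finset.sum_congr rfl fun i _ => Finset.sum_congr rfl fun j _ => by ring
  rw [e1, e2]
  linarith

lemma expect_lin {n : ℕ} (A : Fin n → Fin n → ℕ → ℝ≥0∞) (amax : ℕ)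
    (lam : Fin n → Fin n → ℝ)
    (hbound : ∀ i j k, A i j k ≠ 0 → k ≤ amax)
    (hsum : ∀ i j, (∑' k : ℕ, A i j k) = 1)
    (hmean : ∀ i j, (∑ k ∈ Finset.range (amax + 1), A i j k * (k : ℝ≥0∞))
      = ENNReal.ofReal (lam i j))
    (hlam : ∀ i j, 0 ≤ lam i j)
    (c : Fin n → Fin n → ℝ) (hc : ∀ i j, 0 ≤ c i j) :
    (∑' a : Fin n → Fin n → ℕ,
        SwitchModel.jointA n A a * ENNReal.ofReal (∑ i, ∑ j, (a i j : ℝ) * c i j))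
      = ENNReal.ofReal (∑ i, ∑ j, lam i j * c i j) := by
  rw [tsum_eq_T A amax hbound]
  have hpt : ∀ a : Fin n → Fin n → ℕ, ENNReal.ofReal (∑ i, ∑ j, (a i j : ℝ) * c i j)
      = ∑ i, ∑ j, ENNReal.ofReal (c i j) * ((a i j : ℕ) : ℝ≥0∞) := by
    intro a
    rw [ENNReal.ofReal_sum_of_nonneg (fun i _ => Finset.sum_nonneg fun j _ =>
      mul_nonneg (Nat.cast_nonneg _) (hc i j))]
    refine Finset.sum_congr rfl fun i _ => ?_
    rw [ENNReal.ofReal_sum_of_nonneg (fun j _ => mul_nonneg (Nat.cast_nonneg _) (hc i j))]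
    refine Finset.sum_congr rfl fun j _ => ?_
    rw [mul_comm ((a i j : ℕ) : ℝ) (c i j), ENNReal.ofReal_mul (hc i j), ENNReal.ofReal_natCast]
  rw [Finset.sum_congr rfl fun a _ => by rw [hpt a]]
  have swap : (∑ a ∈ T n amax, SwitchModel.jointA n A a *
        ∑ i, ∑ j, ENNReal.ofReal (c i j) * ((a i j : ℕ) : ℝ≥0∞))
      = ∑ i, ∑ j, ENNReal.ofReal (c i j) *
          ∑ a ∈ T n amax, SwitchModel.jointA n A a * ((a i j : ℕ) : ℝ≥0∞) := by
    simp only [Finset.mul_sum]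
    rw [Finset.sum_comm]
    refine Finset.sum_congr rfl fun i _ => ?_
    rw [Finset.sum_comm]
    exact Finset.sum_congr rfl fun j _ => Finset.sum_congr rfl fun a _ => by ring
  rw [swap]
  rw [Finset.sum_congr rfl fun i _ => Finset.sum_congr rfl fun j _ => by
    rw [mean_entry A amax lam hbound hsum hmean i j]]
  rw [ENNReal.ofReal_sum_of_nonneg (fun i _ => Finset.sum_nonneg fun j _ =>
    mul_nonneg (hlam i j) (hc i j))]
  refine Finset.sum_congr rfl fun i _ => ?_
  rw [ENNReal.ofReal_sum_of_nonneg (fun j _ => mul_nonneg (hlam i j) (hc i j))]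
  refine Finset.sum_congr rfl fun j _ => ?_
  rw [mul_comm (lam i j) (c i j), ENNReal.ofReal_mul (hc i j)]

lemma marg_mean {n : ℕ} (A : Fin n → Fin n → ℕ → ℝ≥0∞) (amax : ℕ)
    (lam : Fin n → Fin n → ℝ)
    (hbound : ∀ i j k, A i j k ≠ 0 → k ≤ amax)
    (hsum : ∀ i j, (∑' k : ℕ, A i j k) = 1)
    (hmeanR : ∀ i j, (∑' k : ℕ, (A i j k).toReal * (k : ℝ)) = lam i j) (i j : Fin n) :
    (∑ k ∈ Finset.range (amax + 1), A i j k * (k : ℝ≥0∞)) = ENNReal.ofReal (lam i j) := by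
  have hfin : ∀ k, A i j k ≠ ⊤ := fun k =>
    ne_top_of_le_ne_top ENNReal.one_ne_top (le_of_le_of_eq (ENNReal.le_tsum k) (hsum i j))
  have hreal : (∑ k ∈ Finset.range (amax + 1), (A i j k).toReal * (k : ℝ)) = lam i j := by
    rw [← hmeanR i j]
    refine (tsum_eq_sum ?_).symm
    intro k hk
    have hz : A i j k = 0 := by
      by_contra hne
      exact absurd (hbound i j k hne) (by simp [Finset.mem_range] at hk; omega)
    simp [hz]
  rw [← hreal, ENNReal.ofReal_sum_of_nonneg
    (fun k _ => mul_nonneg ENNReal.toReal_nonneg (Nat.cast_nonneg _))]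
  refine Finset.sum_congr rfl fun k _ => ?_
  rw [ENNReal.ofReal_mul ENNReal.toReal_nonneg, ENNReal.ofReal_toReal (hfin k),
    ENNReal.ofReal_natCast]

end DriftAux


/-- equation (12) in the proof of Proposition 4.2: one-step drift bound
for `‖q_∥‖²` under a MaxWeight schedule.  The inequality
`E[‖q⁺_∥‖²] − ‖q_∥‖² ≥ −2ε⟨q_∥,ν⟩` is stated as
`‖q_∥‖² ≤ E[‖q⁺_∥‖²] + 2ε⟨q_∥,ν⟩` in `ℝ≥0∞`. -/
theorem drift_Vpar_bound
    (n : ℕ) (hn : 1 ≤ n)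
    (ν : Fin n → Fin n → ℝ) (hν : memF n ν)
    (ε : ℝ) (hε0 : 0 < ε) (hε1 : ε < 1)
    (sig : Fin n → Fin n → ℝ) (amax : ℕ) (hamax : 1 ≤ amax)
    (A : Fin n → Fin n → ℕ → ℝ≥0∞)
    (hA : ArrivalDist n A (fun i j => (1 - ε) * ν i j) sig amax)
    (q : Fin n → Fin n → ℕ) (s : Fin n → Fin n → ℕ)
    (hs : IsPerm n s ∧ ∀ s', IsPerm n s' →
      (∑ i, ∑ j, q i j * s' i j) ≤ (∑ i, ∑ j, q i j * s i j))
    (proj : (Fin n → Fin n → ℝ) → (Fin n → Fin n → ℝ))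
    (hproj : IsConeProj n proj) :
    ENNReal.ofReal (∑ i, ∑ j, (proj (toR n q)) i j ^ 2) ≤
      (∑' a : Fin n → Fin n → ℕ,
          jointA n A a * ENNReal.ofReal (∑ i, ∑ j, (proj (toR n (nextQ n q a s))) i j ^ 2))
      + ENNReal.ofReal (2 * ε * (∑ i, ∑ j, (proj (toR n q)) i j * ν i j)) := by
  classical
  obtain ⟨hAsum, hAbound, hAmean, _⟩ := hA
  obtain ⟨hνpos, hνrow, hνcol⟩ := hν
  obtain ⟨⟨hs01, hsrow, hscol⟩, _⟩ := hs
  set p := proj (toR n q) with hp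
  have hK : p ∈ coneK n := (hproj _).1
  have hpn : ∀ i j, 0 ≤ p i j := fun i j => DriftAux.coneK_nonneg hK i j
  set nsp : ℝ := ∑ i, ∑ j, p i j ^ 2 with hnsp
  set ipν : ℝ := ∑ i, ∑ j, ν i j * p i j with hipν
  set f : (Fin n → Fin n → ℕ) → ℝ :=
    fun a => ∑ i, ∑ j, proj (toR n (nextQ n q a s)) i j ^ 2 with hf
  set g : (Fin n → Fin n → ℕ) → ℝ :=
    fun a => ∑ i, ∑ j, (a i j : ℝ) * p i j with hg
  have h_nsp0 : 0 ≤ nsp := Finset.sum_nonneg fun i _ => Finset.sum_nonneg fun j _ => sq_nonneg _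
  have h_ipν0 : 0 ≤ ipν := Finset.sum_nonneg fun i _ => Finset.sum_nonneg fun j _ =>
    mul_nonneg (hνpos i j) (hpn i j)
  have h_g0 : ∀ a, 0 ≤ g a := fun a => Finset.sum_nonneg fun i _ => Finset.sum_nonneg fun j _ =>
    mul_nonneg (Nat.cast_nonneg _) (hpn i j)
  have h_f0 : ∀ a, 0 ≤ f a := fun a => Finset.sum_nonneg fun i _ =>
    Finset.sum_nonneg fun j _ => sq_nonneg _
  -- the pairing identity: ⟨s, p⟩ = ⟨ν, p⟩
  obtain ⟨w, wt, hw, hwt, hrep⟩ := hK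
  have hpair : (∑ i, ∑ j, (s i j : ℝ) * p i j) = ipν := by
    have hsr : ∀ i, (∑ j, ((s i j : ℝ))) = 1 := by
      intro i; rw [← Nat.cast_sum]; exact_mod_cast hsrow i
    have hsc : ∀ j, (∑ i, ((s i j : ℝ))) = 1 := by
      intro j; rw [← Nat.cast_sum]; exact_mod_cast hscol j
    have h1 : (∑ i, ∑ j, (s i j : ℝ) * p i j) = (∑ i, w i) + ∑ j, wt j := by
      rw [← DriftAux.ip_doubly w wt (fun i j => (s i j : ℝ)) hsr hsc]
      exact Finset.sum_congr rfl fun i _ => Finset.sum_congr rfl fun j _ => by rw [hrep i j]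
    have h2 : ipν = (∑ i, w i) + ∑ j, wt j := by
      rw [hipν, ← DriftAux.ip_doubly w wt ν hνrow hνcol]
      exact Finset.sum_congr rfl fun i _ => Finset.sum_congr rfl fun j _ => by rw [hrep i j]
    rw [h1, h2]
  -- per-arrival deterministic inequality
  have hreal : ∀ a, nsp + 2 * g a ≤ f a + 2 * ipν := by
    intro a
    have h := DriftAux.det_key q a s hproj
    rw [hpair] at h
    exact h
  -- expectation of the linear term
  have hmeanE : ∀ i j, (∑ k ∈ Finset.range (amax + 1), A i j k * (k : ℝ≥0∞))
      = ENNReal.ofReal ((1 - ε) * ν i j) :=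
    DriftAux.marg_mean A amax (fun i j => (1 - ε) * ν i j) hAbound hAsum hAmean
  have hE : (∑' a : Fin n → Fin n → ℕ, jointA n A a * ENNReal.ofReal (2 * g a))
      = ENNReal.ofReal (2 * (1 - ε) * ipν) := by
    have hc : ∀ i j, 0 ≤ 2 * p i j := fun i j => by linarith [hpn i j]
    have hlam : ∀ i j, 0 ≤ (1 - ε) * ν i j := fun i j =>
      mul_nonneg (by linarith) (hνpos i j)
    have hexp := DriftAux.expect_lin A amax (fun i j => (1 - ε) * ν i j) hAbound hAsum hmeanE
      hlam (fun i j => 2 * p i j) hc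
    have e1 : ∀ a : Fin n → Fin n → ℕ, 2 * g a = ∑ i, ∑ j, (a i j : ℝ) * (2 * p i j) := by
      intro a
      rw [hg, Finset.mul_sum]
      exact Finset.sum_congr rfl fun i _ => by
        rw [Finset.mul_sum]; exact Finset.sum_congr rfl fun j _ => by ring
    have e2 : (∑ i, ∑ j, (1 - ε) * ν i j * (2 * p i j)) = 2 * (1 - ε) * ipν := by
      rw [hipν, Finset.mul_sum]
      exact Finset.sum_congr rfl fun i _ => by
        rw [Finset.mul_sum]; exact Finset.sum_congr rfl fun j _ => by ring
    calc (∑' a : Fin n → Fin n → ℕ, jointA n A a * ENNReal.ofReal (2 * g a))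
        = ∑' a : Fin n → Fin n → ℕ, jointA n A a
            * ENNReal.ofReal (∑ i, ∑ j, (a i j : ℝ) * (2 * p i j)) := by
          exact tsum_congr fun a => by rw [e1 a]
      _ = ENNReal.ofReal (∑ i, ∑ j, (1 - ε) * ν i j * (2 * p i j)) := hexp
      _ = ENNReal.ofReal (2 * (1 - ε) * ipν) := by rw [e2]
  have hMass : (∑' a : Fin n → Fin n → ℕ, jointA n A a) = 1 :=
    DriftAux.mass A amax hAbound hAsum
  -- sum up the pointwise inequality
  have step1 : ∀ a : Fin n → Fin n → ℕ,
      jointA n A a * (ENNReal.ofReal nsp + ENNReal.ofReal (2 * g a))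
        ≤ jointA n A a * (ENNReal.ofReal (f a) + ENNReal.ofReal (2 * ipν)) := by
    intro a
    refine mul_le_mul_right ?_ _
    rw [← ENNReal.ofReal_add h_nsp0 (by linarith [h_g0 a]),
      ← ENNReal.ofReal_add (h_f0 a) (by linarith [h_ipν0])]
    exact ENNReal.ofReal_le_ofReal (hreal a)
  have step2 := ENNReal.tsum_le_tsum step1
  have lhs_eq : (∑' a : Fin n → Fin n → ℕ,
      jointA n A a * (ENNReal.ofReal nsp + ENNReal.ofReal (2 * g a)))
      = ENNReal.ofReal nsp + ENNReal.ofReal (2 * (1 - ε) * ipν) := by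
    simp only [mul_add]
    rw [ENNReal.tsum_add, ENNReal.tsum_mul_right, hMass, one_mul, hE]
  have rhs_eq : (∑' a : Fin n → Fin n → ℕ,
      jointA n A a * (ENNReal.ofReal (f a) + ENNReal.ofReal (2 * ipν)))
      = (∑' a : Fin n → Fin n → ℕ, jointA n A a * ENNReal.ofReal (f a))
        + ENNReal.ofReal (2 * ipν) := by
    simp only [mul_add]
    rw [ENNReal.tsum_add, ENNReal.tsum_mul_right, hMass, one_mul]
  rw [lhs_eq, rhs_eq] at step2
  have hsplit : ENNReal.ofReal (2 * ipν)
      = ENNReal.ofReal (2 * (1 - ε) * ipν) + ENNReal.ofReal (2 * ε * ipν) := by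
    rw [← ENNReal.ofReal_add (by nlinarith) (by nlinarith)]
    congr 1; ring
  have hgoalν : (∑ i, ∑ j, p i j * ν i j) = ipν := by
    rw [hipν]
    exact Finset.sum_congr rfl fun i _ => Finset.sum_congr rfl fun j _ => by ring
  have hD : ENNReal.ofReal (2 * (1 - ε) * ipν) ≠ ⊤ := ENNReal.ofReal_ne_top
  have final : ENNReal.ofReal nsp + ENNReal.ofReal (2 * (1 - ε) * ipν)
      ≤ ((∑' a : Fin n → Fin n → ℕ, jointA n A a * ENNReal.ofReal (f a))
          + ENNReal.ofReal (2 * ε * ipν)) + ENNReal.ofReal (2 * (1 - ε) * ipν) := by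
    calc ENNReal.ofReal nsp + ENNReal.ofReal (2 * (1 - ε) * ipν)
        ≤ (∑' a : Fin n → Fin n → ℕ, jointA n A a * ENNReal.ofReal (f a))
          + ENNReal.ofReal (2 * ipν) := step2
      _ = ((∑' a : Fin n → Fin n → ℕ, jointA n A a * ENNReal.ofReal (f a))
          + ENNReal.ofReal (2 * ε * ipν)) + ENNReal.ofReal (2 * (1 - ε) * ipν) := by
        rw [hsplit]; ring
  have hfinal := (ENNReal.add_le_add_iff_right hD).mp final
  rw [hgoalν]
  exact hfinal
end
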